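/- arXiv:2510.11843 — 3 statements merged into one kernel-verified Lean document; each statement's English description precedes it below -/
import Mathlib

section
/- Suppose the constraints are population-level with componentwise nonnegative costs. Let ε1 ≥ 0 and fix c1, c2, c3, c4 > 0. Let π be a policy with G_fea(π) = 0 and 0 ≤ G_opt(π) ≤ ε1. Set L := Ψ(π) and w := γ0 − Σ_{t∈𝒯} c_t(L_t) (so 0 ≤ w ≤ γ0). Then there exists a solution (d, y, z) of the KKT system 𝒦^p(L) satisfying ‖y‖_1 ≤ (|S||𝒯|(|𝒯|+1)/2)·r_max and ‖z‖_1 ≤ |S||A|(|𝒯|² − |𝒯| + 2)·r_max such that (L, y, z, w) is a feasible point of the population-level CMFOMO problem whose objective value satisfies 0 ≤ objective ≤ ε1·c3. -/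
open Finset

namespace CMFG

/-- Membership in the probability simplex on a finite type. -/
def IsSimplex {X : Type*} [Fintype X] (f : X → ℝ) : Prop :=
  (∀ x, 0 ≤ f x) ∧ ∑ x, f x = 1

variable {S A : Type*} [Fintype S] [Fintype A]

/-- A (Markov, randomized) policy: `π t s ∈ Δ(A)` for every time `t` and state `s`. -/
def IsPolicy (π : ℕ → S → A → ℝ) : Prop := ∀ t s, IsSimplex (π t s)

/-- A mean-field flow: `L t ∈ Δ(S × A)` for every time `t`. -/
def IsFlow (L : ℕ → S × A → ℝ) : Prop := ∀ t, IsSimplex (L t)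

/-- The transition data is a Markov kernel: `p t s a m ∈ Δ(S)` whenever `m ∈ Δ(S × A)`. -/
def IsKernel (T : ℕ) (p : ℕ → S → A → (S × A → ℝ) → S → ℝ) : Prop :=
  ∀ t ≤ T, ∀ s a m, IsSimplex m → IsSimplex (p t s a m)

/-- The occupation measure `Ψ(π, L)` of a representative agent using policy `π`
under the mean-field flow `L`. -/
def psi (μ0 : S → ℝ) (p : ℕ → S → A → (S × A → ℝ) → S → ℝ)
    (π : ℕ → S → A → ℝ) (L : ℕ → S × A → ℝ) : ℕ → S × A → ℝ
  | 0 => fun sa => π 0 sa.1 sa.2 * μ0 sa.1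
  | t + 1 => fun sa =>
      π (t + 1) sa.1 sa.2 *
        ∑ sa' : S × A, p t sa'.1 sa'.2 (L t) sa.1 * psi μ0 p π L t sa'

/-- The mean-field flow `Ψ(π)` induced by the policy `π` alone. -/
def psiInd (μ0 : S → ℝ) (p : ℕ → S → A → (S × A → ℝ) → S → ℝ)
    (π : ℕ → S → A → ℝ) : ℕ → S × A → ℝ
  | 0 => fun sa => π 0 sa.1 sa.2 * μ0 sa.1
  | t + 1 => fun sa =>
      π (t + 1) sa.1 sa.2 *
        ∑ sa' : S × A, p t sa'.1 sa'.2 (psiInd μ0 p π t) sa.1 * psiInd μ0 p π t sa'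

/-- Expected cumulative reward `V^π(L)` of policy `π` under the mean-field flow `L`. -/
def V (T : ℕ) (μ0 : S → ℝ) (p : ℕ → S → A → (S × A → ℝ) → S → ℝ)
    (r : ℕ → S → A → (S × A → ℝ) → ℝ) (π : ℕ → S → A → ℝ) (L : ℕ → S × A → ℝ) : ℝ :=
  ∑ t ∈ Finset.range (T + 1), ∑ sa : S × A, r t sa.1 sa.2 (L t) * psi μ0 p π L t sa

/-- Expected cumulative cost `𝒞^π(L) ∈ ℝ^k` of policy `π` under the mean-field flow `L`. -/
def Cost (T k : ℕ) (μ0 : S → ℝ) (p : ℕ → S → A → (S × A → ℝ) → S → ℝ)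
    (c : ℕ → S → A → (S × A → ℝ) → Fin k → ℝ) (π : ℕ → S → A → ℝ)
    (L : ℕ → S × A → ℝ) : Fin k → ℝ :=
  fun i => ∑ t ∈ Finset.range (T + 1), ∑ sa : S × A, c t sa.1 sa.2 (L t) i * psi μ0 p π L t sa

/-- `π` is an optimal policy of the constrained MDP `CMDP(L)` with threshold `γ0`. -/
def IsCMDPOptimal (T k : ℕ) (μ0 : S → ℝ) (p : ℕ → S → A → (S × A → ℝ) → S → ℝ)
    (r : ℕ → S → A → (S × A → ℝ) → ℝ) (c : ℕ → S → A → (S × A → ℝ) → Fin k → ℝ)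
    (γ0 : Fin k → ℝ) (π : ℕ → S → A → ℝ) (L : ℕ → S × A → ℝ) : Prop :=
  IsPolicy π ∧ (∀ i, Cost T k μ0 p c π L i ≤ γ0 i) ∧
    ∀ π', IsPolicy π' → (∀ i, Cost T k μ0 p c π' L i ≤ γ0 i) →
      V T μ0 p r π' L ≤ V T μ0 p r π L

/-- `π` is an optimal policy of the unconstrained MDP `MDP(L)`. -/
def IsMDPOptimal (T : ℕ) (μ0 : S → ℝ) (p : ℕ → S → A → (S × A → ℝ) → S → ℝ)
    (r : ℕ → S → A → (S × A → ℝ) → ℝ) (π : ℕ → S → A → ℝ) (L : ℕ → S × A → ℝ) : Prop :=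
  IsPolicy π ∧ ∀ π', IsPolicy π' → V T μ0 p r π' L ≤ V T μ0 p r π L

/-- `(π, L)` is a Nash equilibrium of the constrained mean-field game (Definition 2.1):
optimality for `CMDP(L)` together with the consistency condition `L = Ψ(π)` on `𝒯`. -/
def IsCMFGNash (T k : ℕ) (μ0 : S → ℝ) (p : ℕ → S → A → (S × A → ℝ) → S → ℝ)
    (r : ℕ → S → A → (S × A → ℝ) → ℝ) (c : ℕ → S → A → (S × A → ℝ) → Fin k → ℝ)
    (γ0 : Fin k → ℝ) (π : ℕ → S → A → ℝ) (L : ℕ → S × A → ℝ) : Prop :=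
  IsCMDPOptimal T k μ0 p r c γ0 π L ∧ ∀ t ≤ T, L t = psiInd μ0 p π t

/-- Strict feasibility (Assumption 3.1) with margin `δ`. -/
def StrictFeasible (T k : ℕ) (μ0 : S → ℝ) (p : ℕ → S → A → (S × A → ℝ) → S → ℝ)
    (c : ℕ → S → A → (S × A → ℝ) → Fin k → ℝ) (γ0 : Fin k → ℝ) (δ : ℝ) : Prop :=
  0 < δ ∧ ∀ L, IsFlow L → ∀ i : Fin k, ∃ π, IsPolicy π ∧
    (∀ j, Cost T k μ0 p c π L j ≤ γ0 j) ∧ Cost T k μ0 p c π L i ≤ γ0 i - δ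

/-- Strengthened strict feasibility (Assumption 5.1) with margin `δ`. -/
def StrongFeasible (T k : ℕ) (μ0 : S → ℝ) (p : ℕ → S → A → (S × A → ℝ) → S → ℝ)
    (c : ℕ → S → A → (S × A → ℝ) → Fin k → ℝ) (γ0 : Fin k → ℝ) (δ : ℝ) : Prop :=
  0 < δ ∧ ∀ L, IsFlow L → ∃ π, IsPolicy π ∧ ∀ i, Cost T k μ0 p c π L i ≤ γ0 i - δ

/-- Continuity (Assumption 3.2): `p`, `r`, `c` are continuous in the mean-field argument. -/
def ContinuousData (T k : ℕ) (p : ℕ → S → A → (S × A → ℝ) → S → ℝ)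
    (r : ℕ → S → A → (S × A → ℝ) → ℝ)
    (c : ℕ → S → A → (S × A → ℝ) → Fin k → ℝ) : Prop :=
  (∀ t ≤ T, ∀ s a, ContinuousOn (fun m : S × A → ℝ => p t s a m) {m | IsSimplex m}) ∧
  (∀ t ≤ T, ∀ s a, ContinuousOn (fun m : S × A → ℝ => r t s a m) {m | IsSimplex m}) ∧
  (∀ t ≤ T, ∀ s a, ContinuousOn (fun m : S × A → ℝ => c t s a m) {m | IsSimplex m})

/-- Boundedness: `0 ≤ r ≤ rmax` and `0 ≤ c ≤ cmax` entrywise on the simplex. -/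
def BoundedData (T k : ℕ) (r : ℕ → S → A → (S × A → ℝ) → ℝ)
    (c : ℕ → S → A → (S × A → ℝ) → Fin k → ℝ) (rmax cmax : ℝ) : Prop :=
  ∀ t ≤ T, ∀ s a m, IsSimplex m →
    (0 ≤ r t s a m ∧ r t s a m ≤ rmax) ∧ ∀ i, 0 ≤ c t s a m i ∧ c t s a m i ≤ cmax

/-- The ℓ¹ norm of a finitely supported real vector. -/
def norm1 {J : Type*} [Fintype J] (v : J → ℝ) : ℝ := ∑ j, |v j|

/-- The ℓ² norm of a finitely supported real vector. -/
noncomputable def norm2 {J : Type*} [Fintype J] (v : J → ℝ) : ℝ :=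
  Real.sqrt (∑ j, (v j) ^ 2)

/-- Lipschitz continuity (Assumption 3.3) of `p`, `r`, `c` in the mean-field argument. -/
def LipschitzData (T k : ℕ) (p : ℕ → S → A → (S × A → ℝ) → S → ℝ)
    (r : ℕ → S → A → (S × A → ℝ) → ℝ)
    (c : ℕ → S → A → (S × A → ℝ) → Fin k → ℝ) (Cp Cr Cc : ℝ) : Prop :=
  0 < Cp ∧ 0 < Cr ∧ 0 < Cc ∧
  ∀ t ≤ T, ∀ m1 m2 : S × A → ℝ, IsSimplex m1 → IsSimplex m2 →
    ((∑ sa : S × A, ∑ s' : S, |p t sa.1 sa.2 m1 s' - p t sa.1 sa.2 m2 s'|) ≤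
        Cp * norm1 (fun sa => m1 sa - m2 sa)) ∧
    ((∑ sa : S × A, |r t sa.1 sa.2 m1 - r t sa.1 sa.2 m2|) ≤
        Cr * norm1 (fun sa => m1 sa - m2 sa)) ∧
    ((∑ sa : S × A, ∑ i, |c t sa.1 sa.2 m1 i - c t sa.1 sa.2 m2 i|) ≤
        Cc * norm1 (fun sa => m1 sa - m2 sa))

/-- Lipschitz continuity of the transition kernels alone. -/
def LipschitzKernel (T : ℕ) (p : ℕ → S → A → (S × A → ℝ) → S → ℝ) (Cp : ℝ) : Prop :=
  0 < Cp ∧ ∀ t ≤ T, ∀ m1 m2 : S × A → ℝ, IsSimplex m1 → IsSimplex m2 →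
    (∑ sa : S × A, ∑ s' : S, |p t sa.1 sa.2 m1 s' - p t sa.1 sa.2 m2 s'|) ≤
      Cp * norm1 (fun sa => m1 sa - m2 sa)

/-- The reward vector `r_L ∈ ℝ^{|S||A||𝒯|}`. -/
def rLvec (T : ℕ) (r : ℕ → S → A → (S × A → ℝ) → ℝ) (L : ℕ → S × A → ℝ) :
    Fin (T + 1) × S × A → ℝ :=
  fun x => r (x.1 : ℕ) x.2.1 x.2.2 (L (x.1 : ℕ))

/-- The cost matrix `c_L ∈ ℝ^{k × |S||A||𝒯|}`. -/
def cLmat (T k : ℕ) (c : ℕ → S → A → (S × A → ℝ) → Fin k → ℝ) (L : ℕ → S × A → ℝ) :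
    Fin k → Fin (T + 1) × S × A → ℝ :=
  fun i x => c (x.1 : ℕ) x.2.1 x.2.2 (L (x.1 : ℕ)) i

/-- The right-hand-side vector `b ∈ ℝ^{|S||𝒯|}`. -/
def bvec (T : ℕ) (μ0 : S → ℝ) : Fin (T + 1) × S → ℝ :=
  fun row => if (row.1 : ℕ) = T then μ0 row.2 else 0

/-- The constraint matrix `A_L ∈ ℝ^{|S||𝒯| × |S||A||𝒯|}`; `A_L d = b` encodes
`Σ_a d_0(s,a) = μ0(s)` and `Σ_a d_{t+1}(s,a) = Σ_{s',a'} p_t(s|s',a',L_t) d_t(s',a')`. -/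
def ALmat [DecidableEq S] (T : ℕ) (p : ℕ → S → A → (S × A → ℝ) → S → ℝ)
    (L : ℕ → S × A → ℝ) : Fin (T + 1) × S → Fin (T + 1) × S × A → ℝ :=
  fun row col =>
    if (row.1 : ℕ) < T then
      (if col.1 = row.1 then p (row.1 : ℕ) col.2.1 col.2.2 (L (row.1 : ℕ)) row.2 else 0) +
        (if (col.1 : ℕ) = (row.1 : ℕ) + 1 ∧ col.2.1 = row.2 then -1 else 0)
    else if (col.1 : ℕ) = 0 ∧ col.2.1 = row.2 then 1 else 0

/-- Matrix–vector product. -/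
def mulVec {I J : Type*} [Fintype J] (M : I → J → ℝ) (v : J → ℝ) : I → ℝ :=
  fun i => ∑ j, M i j * v j

/-- Transposed matrix–vector product `M^⊤ y`. -/
def tmulVec {I J : Type*} [Fintype I] (M : I → J → ℝ) (y : I → ℝ) : J → ℝ :=
  fun j => ∑ i, M i j * y i

/-- Euclidean inner product. -/
def dot {J : Type*} [Fintype J] (u v : J → ℝ) : ℝ := ∑ j, u j * v j

/-- View a vector indexed by `Fin (T+1) × S × A` as a time-indexed family. -/
def toFam (T : ℕ) (d : Fin (T + 1) × S × A → ℝ) : ℕ → S × A → ℝ :=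
  fun t sa => if h : t < T + 1 then d (⟨t, h⟩, sa.1, sa.2) else 0

/-- View a time-indexed family as a vector indexed by `Fin (T+1) × S × A`. -/
def toVec (T : ℕ) (d : ℕ → S × A → ℝ) : Fin (T + 1) × S × A → ℝ :=
  fun x => d (x.1 : ℕ) (x.2.1, x.2.2)

/-- `π ∈ Π(d)`: `π` is a policy inducing the occupation measure `d` wherever
`d` puts positive mass on a state. -/
def InPi (T : ℕ) (d : ℕ → S × A → ℝ) (π : ℕ → S → A → ℝ) : Prop :=
  IsPolicy π ∧ ∀ t ≤ T, ∀ s a, 0 < ∑ a' : A, d t (s, a') →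
    π t s a = d t (s, a) / ∑ a' : A, d t (s, a')

/-- Feasibility for the linear program `LP(L)`. -/
def LPFeasible [DecidableEq S] (T k : ℕ) (μ0 : S → ℝ)
    (p : ℕ → S → A → (S × A → ℝ) → S → ℝ)
    (c : ℕ → S → A → (S × A → ℝ) → Fin k → ℝ) (γ0 : Fin k → ℝ)
    (L : ℕ → S × A → ℝ) (d : Fin (T + 1) × S × A → ℝ) : Prop :=
  mulVec (ALmat T p L) d = bvec T μ0 ∧ (∀ i, dot (cLmat T k c L i) d ≤ γ0 i) ∧ ∀ x, 0 ≤ d x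

/-- Optimality for the linear program `LP(L)` (minimizing `-r_L^⊤ d`). -/
def LPOptimal [DecidableEq S] (T k : ℕ) (μ0 : S → ℝ)
    (p : ℕ → S → A → (S × A → ℝ) → S → ℝ) (r : ℕ → S → A → (S × A → ℝ) → ℝ)
    (c : ℕ → S → A → (S × A → ℝ) → Fin k → ℝ) (γ0 : Fin k → ℝ)
    (L : ℕ → S × A → ℝ) (d : Fin (T + 1) × S × A → ℝ) : Prop :=
  LPFeasible T k μ0 p c γ0 L d ∧
    ∀ d', LPFeasible T k μ0 p c γ0 L d' → dot (rLvec T r L) d' ≤ dot (rLvec T r L) d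

/-- The KKT system `𝒦(L)` associated with `LP(L)`. -/
def KKT [DecidableEq S] (T k : ℕ) (μ0 : S → ℝ)
    (p : ℕ → S → A → (S × A → ℝ) → S → ℝ) (r : ℕ → S → A → (S × A → ℝ) → ℝ)
    (c : ℕ → S → A → (S × A → ℝ) → Fin k → ℝ) (γ0 : Fin k → ℝ) (L : ℕ → S × A → ℝ)
    (d : Fin (T + 1) × S × A → ℝ) (y : Fin (T + 1) × S → ℝ)
    (z : Fin (T + 1) × S × A → ℝ) (lam : Fin k → ℝ) : Prop :=
  (∀ x, -(rLvec T r L x) =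
      tmulVec (ALmat T p L) y x + z x - ∑ i, cLmat T k c L i x * lam i) ∧
  mulVec (ALmat T p L) d = bvec T μ0 ∧
  (∀ i, dot (cLmat T k c L i) d ≤ γ0 i) ∧ (∀ x, 0 ≤ d x) ∧
  (∀ x, 0 ≤ z x) ∧ dot z d = 0 ∧ (∀ i, 0 ≤ lam i) ∧
  (∑ i, lam i * (dot (cLmat T k c L i) d - γ0 i)) = 0

/-- The population-level KKT system `𝒦^p(L)`. -/
def PopKKT [DecidableEq S] (T : ℕ) (μ0 : S → ℝ)
    (p : ℕ → S → A → (S × A → ℝ) → S → ℝ) (r : ℕ → S → A → (S × A → ℝ) → ℝ)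
    (L : ℕ → S × A → ℝ) (d : Fin (T + 1) × S × A → ℝ) (y : Fin (T + 1) × S → ℝ)
    (z : Fin (T + 1) × S × A → ℝ) : Prop :=
  (∀ x, -(rLvec T r L x) = tmulVec (ALmat T p L) y x + z x) ∧
  mulVec (ALmat T p L) d = bvec T μ0 ∧ (∀ x, 0 ≤ d x) ∧ (∀ x, 0 ≤ z x) ∧ dot z d = 0

/-- Bound for the dual variable `y` in CMFOMO. -/
noncomputable def yBound (cardS T : ℕ) (rmax cmax δ : ℝ) : ℝ :=
  (cardS : ℝ) * ((T : ℝ) + 1) * ((T : ℝ) + 2) / 2 * rmax * (1 + ((T : ℝ) + 1) / δ * cmax)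

/-- Bound for the dual variable `z` in CMFOMO. -/
noncomputable def zBound (cardS cardA T : ℕ) (rmax cmax δ : ℝ) : ℝ :=
  (cardS : ℝ) * (cardA : ℝ) * (((T : ℝ) + 1) ^ 2 - ((T : ℝ) + 1) + 2) * rmax *
    (1 + ((T : ℝ) + 1) / δ * cmax)

/-- Bound for the multiplier `λ` in CMFOMO. -/
noncomputable def lamBound (T : ℕ) (rmax δ : ℝ) : ℝ := ((T : ℝ) + 1) * rmax / δ

/-- The feasible region of the CMFOMO optimization problem. -/
noncomputable def CMFOMOFeasible (T k : ℕ) (rmax cmax δ : ℝ) (γ0 : Fin k → ℝ)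
    (Lv : Fin (T + 1) × S × A → ℝ) (y : Fin (T + 1) × S → ℝ)
    (z : Fin (T + 1) × S × A → ℝ) (lam w : Fin k → ℝ) : Prop :=
  (∀ x, 0 ≤ Lv x) ∧ (∀ t : Fin (T + 1), ∑ sa : S × A, Lv (t, sa.1, sa.2) = 1) ∧
  norm1 y ≤ yBound (Fintype.card S) T rmax cmax δ ∧
  (∀ x, 0 ≤ z x) ∧ norm1 z ≤ zBound (Fintype.card S) (Fintype.card A) T rmax cmax δ ∧
  (∀ i, 0 ≤ lam i ∧ lam i ≤ lamBound T rmax δ) ∧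
  (∀ i, 0 ≤ w i ∧ w i ≤ γ0 i)

/-- The CMFOMO objective function. -/
noncomputable def CMFOMOObj [DecidableEq S] (T k : ℕ) (μ0 : S → ℝ)
    (p : ℕ → S → A → (S × A → ℝ) → S → ℝ) (r : ℕ → S → A → (S × A → ℝ) → ℝ)
    (c : ℕ → S → A → (S × A → ℝ) → Fin k → ℝ) (γ0 : Fin k → ℝ)
    (c1 c2 c3 c4 c5 : ℝ) (Lv : Fin (T + 1) × S × A → ℝ) (y : Fin (T + 1) × S → ℝ)
    (z : Fin (T + 1) × S × A → ℝ) (lam w : Fin k → ℝ) : ℝ :=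
  c1 * norm2 (fun x => tmulVec (ALmat T p (toFam T Lv)) y x + z x +
        rLvec T r (toFam T Lv) x - ∑ i, cLmat T k c (toFam T Lv) i x * lam i) +
  c2 * norm2 (fun row => mulVec (ALmat T p (toFam T Lv)) Lv row - bvec T μ0 row) +
  c3 * dot z Lv +
  c4 * norm2 (fun i => γ0 i - dot (cLmat T k c (toFam T Lv) i) Lv - w i) +
  c5 * |∑ i, lam i * (γ0 i - dot (cLmat T k c (toFam T Lv) i) Lv)|

/-- The feasible region of the population-level CMFOMO problem. -/
noncomputable def PopCMFOMOFeasible (T k : ℕ) (rmax : ℝ) (γ0 : Fin k → ℝ)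
    (Lv : Fin (T + 1) × S × A → ℝ) (y : Fin (T + 1) × S → ℝ)
    (z : Fin (T + 1) × S × A → ℝ) (w : Fin k → ℝ) : Prop :=
  (∀ x, 0 ≤ Lv x) ∧ (∀ t : Fin (T + 1), ∑ sa : S × A, Lv (t, sa.1, sa.2) = 1) ∧
  norm1 y ≤ (Fintype.card S : ℝ) * ((T : ℝ) + 1) * ((T : ℝ) + 2) / 2 * rmax ∧
  (∀ x, 0 ≤ z x) ∧
  norm1 z ≤ (Fintype.card S : ℝ) * (Fintype.card A : ℝ) *
      (((T : ℝ) + 1) ^ 2 - ((T : ℝ) + 1) + 2) * rmax ∧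
  (∀ i, 0 ≤ w i ∧ w i ≤ γ0 i)

/-- The population-level CMFOMO objective function. -/
noncomputable def PopCMFOMOObj [DecidableEq S] (T k : ℕ) (μ0 : S → ℝ)
    (p : ℕ → S → A → (S × A → ℝ) → S → ℝ) (r : ℕ → S → A → (S × A → ℝ) → ℝ)
    (cp : ℕ → (S × A → ℝ) → Fin k → ℝ) (γ0 : Fin k → ℝ)
    (c1 c2 c3 c4 : ℝ) (Lv : Fin (T + 1) × S × A → ℝ) (y : Fin (T + 1) × S → ℝ)
    (z : Fin (T + 1) × S × A → ℝ) (w : Fin k → ℝ) : ℝ :=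
  c1 * norm2 (fun x => tmulVec (ALmat T p (toFam T Lv)) y x + z x + rLvec T r (toFam T Lv) x) +
  c2 * norm2 (fun row => mulVec (ALmat T p (toFam T Lv)) Lv row - bvec T μ0 row) +
  c3 * dot z Lv +
  c4 * norm2 (fun i => γ0 i -
    dot (cLmat T k (fun t _ _ m => cp t m) (toFam T Lv) i) Lv - w i)

/-- The optimal value `V*_c(L)` of the constrained MDP `CMDP(L)`. -/
noncomputable def Vstar (T k : ℕ) (μ0 : S → ℝ) (p : ℕ → S → A → (S × A → ℝ) → S → ℝ)
    (r : ℕ → S → A → (S × A → ℝ) → ℝ) (c : ℕ → S → A → (S × A → ℝ) → Fin k → ℝ)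
    (γ0 : Fin k → ℝ) (L : ℕ → S × A → ℝ) : ℝ :=
  sSup {v | ∃ π, IsPolicy π ∧ (∀ i, Cost T k μ0 p c π L i ≤ γ0 i) ∧ v = V T μ0 p r π L}

/-- The optimal value of the unconstrained MDP `MDP(L)`. -/
noncomputable def VstarU (T : ℕ) (μ0 : S → ℝ) (p : ℕ → S → A → (S × A → ℝ) → S → ℝ)
    (r : ℕ → S → A → (S × A → ℝ) → ℝ) (L : ℕ → S × A → ℝ) : ℝ :=
  sSup {v | ∃ π, IsPolicy π ∧ v = V T μ0 p r π L}

/-- The optimality gap `G_opt(π)`. -/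
noncomputable def Gopt (T k : ℕ) (μ0 : S → ℝ) (p : ℕ → S → A → (S × A → ℝ) → S → ℝ)
    (r : ℕ → S → A → (S × A → ℝ) → ℝ) (c : ℕ → S → A → (S × A → ℝ) → Fin k → ℝ)
    (γ0 : Fin k → ℝ) (π : ℕ → S → A → ℝ) : ℝ :=
  Vstar T k μ0 p r c γ0 (psiInd μ0 p π) - V T μ0 p r π (psiInd μ0 p π)

/-- The feasibility gap `G_fea(π)`. -/
noncomputable def Gfea (T k : ℕ) (μ0 : S → ℝ) (p : ℕ → S → A → (S × A → ℝ) → S → ℝ)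
    (c : ℕ → S → A → (S × A → ℝ) → Fin k → ℝ) (γ0 : Fin k → ℝ)
    (π : ℕ → S → A → ℝ) : ℝ :=
  norm2 (fun i : Fin k => min 0 (γ0 i - Cost T k μ0 p c π (psiInd μ0 p π) i))

/-- The population-level optimality gap. -/
noncomputable def GoptPop (T : ℕ) (μ0 : S → ℝ) (p : ℕ → S → A → (S × A → ℝ) → S → ℝ)
    (r : ℕ → S → A → (S × A → ℝ) → ℝ) (π : ℕ → S → A → ℝ) : ℝ :=
  VstarU T μ0 p r (psiInd μ0 p π) - V T μ0 p r π (psiInd μ0 p π)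

/-- The population-level feasibility gap. -/
noncomputable def GfeaPop (T k : ℕ) (μ0 : S → ℝ) (p : ℕ → S → A → (S × A → ℝ) → S → ℝ)
    (cp : ℕ → (S × A → ℝ) → Fin k → ℝ) (γ0 : Fin k → ℝ) (π : ℕ → S → A → ℝ) : ℝ :=
  norm2 (fun i : Fin k =>
    min 0 (γ0 i - ∑ t ∈ Finset.range (T + 1), cp t (psiInd μ0 p π t) i))

section NPlayer

variable [DecidableEq S] [DecidableEq A]

/-- Empirical state-action distribution of `N` players. -/
noncomputable def emp (N : ℕ) (x : Fin N → S × A) : S × A → ℝ :=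
  fun sa => (∑ i, if x i = sa then (1 : ℝ) else 0) / (N : ℝ)

/-- The joint law, at each time `t`, of the state-action profile of the `N` players
under the policy profile `πv`. -/
noncomputable def jointLaw (N : ℕ) (μ0 : S → ℝ) (p : ℕ → S → A → (S × A → ℝ) → S → ℝ)
    (πv : Fin N → ℕ → S → A → ℝ) : ℕ → (Fin N → S × A) → ℝ
  | 0 => fun x => ∏ i, μ0 (x i).1 * πv i 0 (x i).1 (x i).2
  | t + 1 => fun x => ∑ x' : Fin N → S × A, jointLaw N μ0 p πv t x' *
      ∏ i, p t (x' i).1 (x' i).2 (emp N x') (x i).1 * πv i (t + 1) (x i).1 (x i).2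

/-- Expected cumulative reward `V^{(i)}` of player `i` in the `N`-player game. -/
noncomputable def Vplayer (N T : ℕ) (μ0 : S → ℝ) (p : ℕ → S → A → (S × A → ℝ) → S → ℝ)
    (r : ℕ → S → A → (S × A → ℝ) → ℝ) (πv : Fin N → ℕ → S → A → ℝ) (i : Fin N) : ℝ :=
  ∑ t ∈ Finset.range (T + 1), ∑ x : Fin N → S × A,
    jointLaw N μ0 p πv t x * r t (x i).1 (x i).2 (emp N x)

/-- Expected cumulative cost `γ^{(i)}` of player `i` in the `N`-player game. -/
noncomputable def CostPlayer (N T k : ℕ) (μ0 : S → ℝ) (p : ℕ → S → A → (S × A → ℝ) → S → ℝ)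
    (c : ℕ → S → A → (S × A → ℝ) → Fin k → ℝ) (πv : Fin N → ℕ → S → A → ℝ)
    (i : Fin N) : Fin k → ℝ :=
  fun j => ∑ t ∈ Finset.range (T + 1), ∑ x : Fin N → S × A,
    jointLaw N μ0 p πv t x * c t (x i).1 (x i).2 (emp N x) j

/-- Feasibility gap `G_fea^{(i)}` of player `i` in the `N`-player game. -/
noncomputable def GfeaPlayer (N T k : ℕ) (μ0 : S → ℝ)
    (p : ℕ → S → A → (S × A → ℝ) → S → ℝ) (c : ℕ → S → A → (S × A → ℝ) → Fin k → ℝ)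
    (γ0 : Fin k → ℝ) (πv : Fin N → ℕ → S → A → ℝ) (i : Fin N) : ℝ :=
  norm2 (fun j : Fin k => min 0 (γ0 j - CostPlayer N T k μ0 p c πv i j))

/-- `(ε1, ε2)`-Nash equilibrium of the constrained `N`-player game. -/
noncomputable def IsEpsNash (N T k : ℕ) (μ0 : S → ℝ)
    (p : ℕ → S → A → (S × A → ℝ) → S → ℝ) (r : ℕ → S → A → (S × A → ℝ) → ℝ)
    (c : ℕ → S → A → (S × A → ℝ) → Fin k → ℝ) (γ0 : Fin k → ℝ)
    (πv : Fin N → ℕ → S → A → ℝ) (ε1 ε2 : ℝ) : Prop :=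
  ∀ i : Fin N,
    (∀ π', IsPolicy π' →
      GfeaPlayer N T k μ0 p c γ0 (Function.update πv i π') i = 0 →
      Vplayer N T μ0 p r (Function.update πv i π') i ≤ Vplayer N T μ0 p r πv i + ε1) ∧
    GfeaPlayer N T k μ0 p c γ0 πv i ≤ ε2

end NPlayer

end CMFG

/-!
Freeze the flow at `L = Ψ(π)` and let `Q_t`, `W_t = max_a Q_t(·, a)` be the optimal Q- and value
functions of the resulting finite-horizon MDP, computed by backward induction. The dual vector
`y` built from `W` and the Bellman residual `z = W - Q ≥ 0` satisfy `-r_L = A_Lᵀ y + z` exactly.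
Since the occupation measure `d` of any policy solves `A_L d = b`, weak duality gives
`z ⬝ d = ∑ μ0 W_0 - V(d)`. Hence `∑ μ0 W_0` is the optimal value, the greedy policy (on whose
support `z` vanishes) completes a KKT solution, and `z ⬝ L = G_opt(π)`; every other term of the
CMFOMO objective vanishes, so the objective equals `c3 G_opt(π)`. The bounds on `y` and `z` follow
from `0 ≤ W_t ≤ (T + 1 - t) r_max`.
-/

namespace CMFG

variable {S A : Type*}

section Occupation

variable [Fintype S] [Fintype A]

lemma isSimplex_occupation_zero {μ0 : S → ℝ} (hμ0 : IsSimplex μ0) {π0 : S → A → ℝ}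
    (hπ0 : ∀ s, IsSimplex (π0 s)) :
    IsSimplex (fun sa : S × A => π0 sa.1 sa.2 * μ0 sa.1) := by
  refine ⟨fun sa => mul_nonneg ((hπ0 sa.1).1 sa.2) (hμ0.1 sa.1), ?_⟩
  simp only [Fintype.sum_prod_type, ← sum_mul, (hπ0 _).2, one_mul, hμ0.2]

lemma isSimplex_occupation_succ {q : S → A → S → ℝ} (hq : ∀ s a, IsSimplex (q s a))
    {π1 : S → A → ℝ} (hπ1 : ∀ s, IsSimplex (π1 s)) {ψ : S × A → ℝ} (hψ : IsSimplex ψ) :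
    IsSimplex (fun sa : S × A => π1 sa.1 sa.2 * ∑ sa' : S × A, q sa'.1 sa'.2 sa.1 * ψ sa') := by
  refine ⟨fun sa => mul_nonneg ((hπ1 sa.1).1 sa.2) (sum_nonneg fun sa' _ =>
    mul_nonneg ((hq _ _).1 _) (hψ.1 sa')), ?_⟩
  rw [Fintype.sum_prod_type]
  simp only [← sum_mul, (hπ1 _).2, one_mul]
  rw [sum_comm]
  simp only [← sum_mul, (hq _ _).2, one_mul, hψ.2]

variable {T : ℕ} {μ0 : S → ℝ} {p : ℕ → S → A → (S × A → ℝ) → S → ℝ} {π : ℕ → S → A → ℝ}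

lemma isSimplex_psi (hμ0 : IsSimplex μ0) (hp : IsKernel T p) {L : ℕ → S × A → ℝ}
    (hL : ∀ t ≤ T, IsSimplex (L t)) (hπ : IsPolicy π) :
    ∀ t ≤ T, IsSimplex (psi μ0 p π L t)
  | 0, _ => isSimplex_occupation_zero hμ0 (hπ 0)
  | t + 1, ht => isSimplex_occupation_succ (fun s a => hp t (by omega) s a _ (hL t (by omega)))
      (hπ (t + 1)) (isSimplex_psi hμ0 hp hL hπ t (by omega))

lemma isSimplex_psiInd (hμ0 : IsSimplex μ0) (hp : IsKernel T p) (hπ : IsPolicy π) :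
    ∀ t ≤ T, IsSimplex (psiInd μ0 p π t)
  | 0, _ => isSimplex_occupation_zero hμ0 (hπ 0)
  | t + 1, ht =>
    have ih := isSimplex_psiInd hμ0 hp hπ t (by omega)
    isSimplex_occupation_succ (fun s a => hp t (by omega) s a _ ih) (hπ (t + 1)) ih

lemma psi_psiInd : psi μ0 p π (psiInd μ0 p π) = psiInd μ0 p π := by
  funext t
  induction t with
  | zero => rfl
  | succ t ih => funext sa; simp only [psi, psiInd, ih]

lemma psi_eq_zero_of_policy_eq_zero {L : ℕ → S × A → ℝ} {t : ℕ} {s : S} {a : A}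
    (h : π t s a = 0) : psi μ0 p π L t (s, a) = 0 := by
  cases t <;> simp [psi, h]

end Occupation

lemma dot_tmulVec {I J : Type*} [Fintype I] [Fintype J] (M : I → J → ℝ) (y : I → ℝ)
    (v : J → ℝ) : dot (tmulVec M y) v = dot y (mulVec M v) := by
  simp only [dot, tmulVec, mulVec, sum_mul, mul_sum]
  rw [sum_comm]
  exact sum_congr rfl fun i _ => sum_congr rfl fun j _ => by ring

lemma dot_eq_of_neg_eq_tmulVec_add {I J : Type*} [Fintype I] [Fintype J] {M : I → J → ℝ}
    {c z d : J → ℝ} {y b : I → ℝ} (hstat : ∀ x, -c x = tmulVec M y x + z x)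
    (hd : mulVec M d = b) : dot z d = -dot c d - dot y b := by
  rw [← hd, ← dot_tmulVec]
  simp only [dot, ← sum_neg_distrib, ← sum_sub_distrib]
  exact sum_congr rfl fun x _ => by linear_combination -d x * hstat x

lemma norm2_eq_zero_iff {J : Type*} [Fintype J] {v : J → ℝ} :
    norm2 v = 0 ↔ ∀ j, v j = 0 := by
  rw [norm2, Real.sqrt_eq_zero (sum_nonneg fun j _ => sq_nonneg (v j)),
    sum_eq_zero_iff_of_nonneg fun j _ => sq_nonneg (v j)]
  simp

lemma sum_fin_prod_eq_sum_range {X : Type*} [Fintype X] (T : ℕ) (F : ℕ → X → ℝ) :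
    ∑ x : Fin (T + 1) × X, F x.1 x.2 = ∑ t ∈ range (T + 1), ∑ x, F t x := by
  rw [Fintype.sum_prod_type, ← Fin.sum_univ_eq_sum_range (fun t => ∑ x, F t x)]

lemma sum_range_sub_eq (n : ℕ) : ∑ t ∈ range n, ((n : ℝ) - t) = n * (n + 1) / 2 := by
  induction n with
  | zero => simp
  | succ n ih =>
    rw [sum_range_succ']
    push_cast
    simp only [add_sub_add_right_eq_sub, ih]
    ring

section LinearProgram

lemma toFam_toVec (T : ℕ) (L : ℕ → S × A → ℝ) {t : ℕ} (ht : t < T + 1) :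
    toFam T (toVec T L) t = L t := by
  funext sa
  simp [toFam, toVec, ht]

variable {T : ℕ} {L : ℕ → S × A → ℝ}

lemma ALmat_toFam_toVec [DecidableEq S] (p : ℕ → S → A → (S × A → ℝ) → S → ℝ) :
    ALmat T p (toFam T (toVec T L)) = ALmat T p L := by
  funext row col
  simp only [ALmat, toFam_toVec T L row.1.isLt]

lemma rLvec_toFam_toVec (r : ℕ → S → A → (S × A → ℝ) → ℝ) :
    rLvec T r (toFam T (toVec T L)) = rLvec T r L := by
  funext x
  simp only [rLvec, toFam_toVec T L x.1.isLt]

lemma cLmat_toFam_toVec {k : ℕ} (c : ℕ → S → A → (S × A → ℝ) → Fin k → ℝ) :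
    cLmat T k c (toFam T (toVec T L)) = cLmat T k c L := by
  funext i x
  simp only [cLmat, toFam_toVec T L x.1.isLt]

/-- Rows `(u, s)` of `A_L` with `u < T` are the flow constraints into time `u + 1`, while the
rows `(T, s)` carry the initial condition; this dual vector pairs them with `W_{u+1}` and `-W_0`. -/
def dualOfValue (T : ℕ) (W : ℕ → S → ℝ) : Fin (T + 1) × S → ℝ :=
  fun us => if (us.1 : ℕ) < T then W (us.1 + 1) us.2 else -W 0 us.2

variable [Fintype S]

lemma dot_dualOfValue_bvec (W : ℕ → S → ℝ) (μ0 : S → ℝ) :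
    dot (dualOfValue T W) (bvec T μ0) = -∑ s, μ0 s * W 0 s := by
  rw [dot, Fintype.sum_prod_type, Fintype.sum_eq_single (Fin.last T) fun u hu =>
    sum_eq_zero fun s _ => by
      simp only [bvec, if_neg fun h : (u : ℕ) = T => hu (Fin.ext h), mul_zero]]
  simp [dualOfValue, bvec, mul_comm]

lemma norm1_dualOfValue (W : ℕ → S → ℝ) :
    norm1 (dualOfValue T W) = ∑ t ∈ range (T + 1), ∑ s, |W t s| := by
  rw [norm1, Fintype.sum_prod_type, Fin.sum_univ_castSucc, sum_range_succ',
    ← Fin.sum_univ_eq_sum_range (fun t => ∑ s, |W (t + 1) s|)]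
  simp [dualOfValue]

variable [DecidableEq S] {p : ℕ → S → A → (S × A → ℝ) → S → ℝ}

lemma tmulVec_ALmat_dualOfValue (W : ℕ → S → ℝ) (t : Fin (T + 1)) (s : S) (a : A) :
    tmulVec (ALmat T p L) (dualOfValue T W) (t, s, a) =
      (if (t : ℕ) < T then ∑ s', p t s a (L t) s' * W (t + 1) s' else 0) - W t s := by
  simp only [tmulVec, Fintype.sum_prod_type, Fin.sum_univ_castSucc, ALmat, dualOfValue]
  simp only [Fin.val_castSucc, Fin.is_lt, ↓reduceIte, ite_and, add_mul, ite_mul, zero_mul,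
    neg_mul, one_mul, sum_add_distrib, sum_ite_irrel, sum_const_zero, sum_ite_eq, mem_univ,
    Fin.val_last, lt_self_iff_false, Fin.val_eq_zero_iff, mul_neg, sum_neg_distrib]
  simp only [Fin.ext_iff, Fin.val_castSucc, Fin.val_zero]
  rw [Fin.sum_univ_eq_sum_range
      (fun n => if (t : ℕ) = n then ∑ s', p n s a (L n) s' * W (n + 1) s' else 0),
    Fin.sum_univ_eq_sum_range (fun n => if (t : ℕ) = n + 1 then -W (n + 1) s else 0),
    sum_ite_eq]
  obtain ⟨t, ht⟩ := t
  cases t with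
  | zero => simp [sub_eq_add_neg]
  | succ t =>
    rw [sum_eq_single t (fun n _ hn => if_neg fun h => hn (by simp at h; omega))
      (fun h => by simp at h; omega)]
    simp [sub_eq_add_neg]

variable [Fintype A]

lemma mulVec_ALmat_toVec (D : ℕ → S × A → ℝ) (u : Fin (T + 1)) (s : S) :
    mulVec (ALmat T p L) (toVec T D) (u, s) =
      if (u : ℕ) < T then
        ∑ sa : S × A, p u sa.1 sa.2 (L u) s * D u sa - ∑ a, D (u + 1) (s, a)
      else ∑ a, D 0 (s, a) := by
  simp only [mulVec, ALmat, toVec]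
  split_ifs with hu
  · simp only [Prod.mk.eta, add_mul, ite_mul, zero_mul, neg_mul, one_mul, sum_add_distrib,
      Fintype.sum_prod_type, sum_ite_irrel, sum_const_zero, sum_ite_eq', mem_univ, ↓reduceIte]
    rw [Fintype.sum_eq_single ⟨u + 1, by omega⟩ fun x hx => sum_eq_zero fun _ _ =>
      sum_eq_zero fun _ _ => if_neg fun h => hx (Fin.ext h.1)]
    simp [sum_ite_irrel, sub_eq_add_neg]
  · simp only [Fintype.sum_prod_type, ite_mul, one_mul, zero_mul]
    rw [Fintype.sum_eq_single 0 fun x hx => sum_eq_zero fun _ _ =>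
      sum_eq_zero fun _ _ => if_neg fun h => hx (Fin.ext h.1)]
    simp [sum_ite_irrel]

lemma mulVec_ALmat_psi {μ0 : S → ℝ} {π : ℕ → S → A → ℝ} (hπ : IsPolicy π) :
    mulVec (ALmat T p L) (toVec T (psi μ0 p π L)) = bvec T μ0 := by
  funext ⟨u, s⟩
  simp only [mulVec_ALmat_toVec, bvec]
  split_ifs with hu huT huT
  · omega
  · simp only [psi, ← sum_mul, (hπ _ s).2, one_mul, sub_self]
  · simp only [psi, ← sum_mul, (hπ 0 s).2, one_mul]
  · omega

end LinearProgram

lemma dot_rLvec_toVec_psi [Fintype S] [Fintype A] (T : ℕ) (μ0 : S → ℝ)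
    (p : ℕ → S → A → (S × A → ℝ) → S → ℝ) (r : ℕ → S → A → (S × A → ℝ) → ℝ)
    (π : ℕ → S → A → ℝ) (L : ℕ → S × A → ℝ) :
    dot (rLvec T r L) (toVec T (psi μ0 p π L)) = V T μ0 p r π L :=
  sum_fin_prod_eq_sum_range T fun t sa => r t sa.1 sa.2 (L t) * psi μ0 p π L t sa

section DynamicProgramming

variable [Fintype S] [Fintype A] [Nonempty A] (T : ℕ)
  (p : ℕ → S → A → (S × A → ℝ) → S → ℝ) (r : ℕ → S → A → (S × A → ℝ) → ℝ)
  (L : ℕ → S × A → ℝ)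

noncomputable def optQ (t : ℕ) (s : S) (a : A) : ℝ :=
  r t s a (L t) + if t < T then
    ∑ s', p t s a (L t) s' * univ.sup' univ_nonempty (optQ (t + 1) s') else 0
termination_by T - t

noncomputable def optValue (t : ℕ) (s : S) : ℝ := univ.sup' univ_nonempty (optQ T p r L t s)

lemma optQ_eq (t : ℕ) (s : S) (a : A) :
    optQ T p r L t s a = r t s a (L t) +
      if t < T then ∑ s', p t s a (L t) s' * optValue T p r L (t + 1) s' else 0 := by
  rw [optQ]
  rfl

lemma optQ_le_optValue (t : ℕ) (s : S) (a : A) : optQ T p r L t s a ≤ optValue T p r L t s :=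
  le_sup' _ (mem_univ a)

lemma optQ_nonneg (hp : IsKernel T p) (hr : ∀ t ≤ T, ∀ s a m, IsSimplex m → 0 ≤ r t s a m)
    (hL : ∀ t ≤ T, IsSimplex (L t)) {t : ℕ} (ht : t ≤ T) (s : S) (a : A) :
    0 ≤ optQ T p r L t s a := by
  induction ht using Nat.decreasingInduction generalizing s a with
  | self => simpa [optQ_eq] using hr T le_rfl s a _ (hL T le_rfl)
  | of_succ t ht ih =>
    rw [optQ_eq, if_pos ht]
    refine add_nonneg (hr t ht.le s a _ (hL t ht.le)) (sum_nonneg fun s' _ => ?_)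
    exact mul_nonneg ((hp t ht.le s a _ (hL t ht.le)).1 s')
      (le_sup'_of_le _ (mem_univ (Classical.arbitrary A)) (ih s' _))

lemma optValue_nonneg (hp : IsKernel T p) (hr : ∀ t ≤ T, ∀ s a m, IsSimplex m → 0 ≤ r t s a m)
    (hL : ∀ t ≤ T, IsSimplex (L t)) {t : ℕ} (ht : t ≤ T) (s : S) :
    0 ≤ optValue T p r L t s :=
  le_sup'_of_le _ (mem_univ (Classical.arbitrary A)) (optQ_nonneg T p r L hp hr hL ht s _)

lemma optValue_le {rmax : ℝ} (hp : IsKernel T p)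
    (hr : ∀ t ≤ T, ∀ s a m, IsSimplex m → r t s a m ≤ rmax)
    (hL : ∀ t ≤ T, IsSimplex (L t)) {t : ℕ} (ht : t ≤ T) (s : S) :
    optValue T p r L t s ≤ ((T : ℝ) + 1 - t) * rmax := by
  induction ht using Nat.decreasingInduction generalizing s with
  | self => exact sup'_le _ _ fun a _ => by simpa [optQ_eq] using hr T le_rfl s a _ (hL T le_rfl)
  | of_succ t ht ih =>
    refine sup'_le _ _ fun a _ => ?_
    have hpt := hp t ht.le s a _ (hL t ht.le)
    have hnext : ∑ s', p t s a (L t) s' * optValue T p r L (t + 1) s' ≤ ((T : ℝ) - t) * rmax :=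
      calc _ ≤ ∑ s', p t s a (L t) s' * (((T : ℝ) + 1 - (t + 1 : ℕ)) * rmax) :=
            sum_le_sum fun s' _ => mul_le_mul_of_nonneg_left (ih s') (hpt.1 s')
        _ = ((T : ℝ) - t) * rmax := by rw [← sum_mul, hpt.2]; push_cast; ring
    rw [optQ_eq, if_pos ht]
    linarith [hr t ht.le s a _ (hL t ht.le)]

lemma sum_optValue_le {rmax : ℝ} (hp : IsKernel T p)
    (hr : ∀ t ≤ T, ∀ s a m, IsSimplex m → r t s a m ≤ rmax) (hL : ∀ t ≤ T, IsSimplex (L t)) :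
    ∑ t ∈ range (T + 1), ∑ s, optValue T p r L t s ≤
      Fintype.card S * (((T : ℝ) + 1) * ((T : ℝ) + 2) / 2) * rmax :=
  calc _ ≤ ∑ t ∈ range (T + 1), ∑ _s : S, (((T + 1 : ℕ) : ℝ) - t) * rmax :=
        sum_le_sum fun t ht => sum_le_sum fun s _ => by
          push_cast
          exact optValue_le T p r L hp hr hL (mem_range_succ_iff.1 ht) s
    _ = _ := by
        simp only [sum_const, card_univ, nsmul_eq_mul, ← mul_sum, ← sum_mul, sum_range_sub_eq]
        push_cast
        ring

noncomputable def greedyAction (t : ℕ) (s : S) : A :=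
  (exists_mem_eq_sup' univ_nonempty (optQ T p r L t s)).choose

lemma optValue_eq_optQ_greedyAction (t : ℕ) (s : S) :
    optValue T p r L t s = optQ T p r L t s (greedyAction T p r L t s) :=
  (exists_mem_eq_sup' univ_nonempty (optQ T p r L t s)).choose_spec.2

noncomputable def greedyPolicy [DecidableEq A] (t : ℕ) (s : S) (a : A) : ℝ :=
  if a = greedyAction T p r L t s then 1 else 0

lemma isPolicy_greedyPolicy [DecidableEq A] : IsPolicy (greedyPolicy T p r L) :=
  fun t s => ⟨fun a => by unfold greedyPolicy; split_ifs <;> norm_num,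
    by simp [greedyPolicy]⟩

noncomputable def bellmanGap (x : Fin (T + 1) × S × A) : ℝ :=
  optValue T p r L x.1 x.2.1 - optQ T p r L x.1 x.2.1 x.2.2

lemma bellmanGap_nonneg (x : Fin (T + 1) × S × A) : 0 ≤ bellmanGap T p r L x :=
  sub_nonneg.2 (optQ_le_optValue T p r L _ _ _)

lemma neg_rLvec_eq_tmulVec_add_bellmanGap [DecidableEq S] (x : Fin (T + 1) × S × A) :
    -rLvec T r L x =
      tmulVec (ALmat T p L) (dualOfValue T (optValue T p r L)) x + bellmanGap T p r L x := by
  obtain ⟨t, s, a⟩ := x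
  rw [tmulVec_ALmat_dualOfValue, bellmanGap, optQ_eq, rLvec]
  ring

lemma dot_bellmanGap_psi_greedyPolicy [DecidableEq A] (μ0 : S → ℝ) :
    dot (bellmanGap T p r L) (toVec T (psi μ0 p (greedyPolicy T p r L) L)) = 0 := by
  refine sum_eq_zero fun ⟨t, s, a⟩ _ => ?_
  by_cases ha : a = greedyAction T p r L t s
  · simp [bellmanGap, ha, ← optValue_eq_optQ_greedyAction]
  · rw [toVec, psi_eq_zero_of_policy_eq_zero (if_neg ha), mul_zero]

lemma dot_bellmanGap_psi [DecidableEq S] (μ0 : S → ℝ) {π : ℕ → S → A → ℝ} (hπ : IsPolicy π) :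
    dot (bellmanGap T p r L) (toVec T (psi μ0 p π L)) =
      ∑ s, μ0 s * optValue T p r L 0 s - V T μ0 p r π L := by
  rw [dot_eq_of_neg_eq_tmulVec_add (neg_rLvec_eq_tmulVec_add_bellmanGap T p r L)
    (mulVec_ALmat_psi hπ), dot_dualOfValue_bvec, dot_rLvec_toVec_psi]
  ring

lemma VstarU_eq_sum_optValue {μ0 : S → ℝ} (hμ0 : IsSimplex μ0) (hp : IsKernel T p)
    (hL : ∀ t ≤ T, IsSimplex (L t)) :
    VstarU T μ0 p r L = ∑ s, μ0 s * optValue T p r L 0 s := by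
  classical
  refine IsGreatest.csSup_eq ⟨⟨greedyPolicy T p r L, isPolicy_greedyPolicy T p r L, ?_⟩, ?_⟩
  · linarith [dot_bellmanGap_psi T p r L μ0 (isPolicy_greedyPolicy T p r L),
      dot_bellmanGap_psi_greedyPolicy T p r L μ0]
  · rintro _ ⟨π, hπ, rfl⟩
    have hdot : 0 ≤ dot (bellmanGap T p r L) (toVec T (psi μ0 p π L)) :=
      sum_nonneg fun x _ => mul_nonneg (bellmanGap_nonneg T p r L x)
        ((isSimplex_psi hμ0 hp hL hπ x.1 (by omega)).1 _)
    linarith [dot_bellmanGap_psi T p r L μ0 hπ]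

lemma popKKT_greedyPolicy [DecidableEq S] [DecidableEq A] {μ0 : S → ℝ} (hμ0 : IsSimplex μ0)
    (hp : IsKernel T p) (hL : ∀ t ≤ T, IsSimplex (L t)) :
    PopKKT T μ0 p r L (toVec T (psi μ0 p (greedyPolicy T p r L) L))
      (dualOfValue T (optValue T p r L)) (bellmanGap T p r L) :=
  ⟨neg_rLvec_eq_tmulVec_add_bellmanGap T p r L, mulVec_ALmat_psi (isPolicy_greedyPolicy T p r L),
    fun x => (isSimplex_psi hμ0 hp hL (isPolicy_greedyPolicy T p r L) x.1 (by omega)).1 _,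
    bellmanGap_nonneg T p r L, dot_bellmanGap_psi_greedyPolicy T p r L μ0⟩

lemma goptPop_eq_dot_bellmanGap {μ0 : S → ℝ} (hμ0 : IsSimplex μ0) (hp : IsKernel T p)
    {π : ℕ → S → A → ℝ} (hπ : IsPolicy π) :
    GoptPop T μ0 p r π =
      dot (bellmanGap T p r (psiInd μ0 p π)) (toVec T (psiInd μ0 p π)) := by
  classical
  have h := dot_bellmanGap_psi T p r (psiInd μ0 p π) μ0 hπ
  rw [psi_psiInd] at h
  rw [h, GoptPop, VstarU_eq_sum_optValue T p r _ hμ0 hp (isSimplex_psiInd hμ0 hp hπ)]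

lemma norm1_dualOfValue_optValue_le {rmax : ℝ} (hp : IsKernel T p)
    (hr : ∀ t ≤ T, ∀ s a m, IsSimplex m → 0 ≤ r t s a m ∧ r t s a m ≤ rmax)
    (hL : ∀ t ≤ T, IsSimplex (L t)) :
    norm1 (dualOfValue T (optValue T p r L)) ≤
      (Fintype.card S : ℝ) * ((T : ℝ) + 1) * ((T : ℝ) + 2) / 2 * rmax := by
  rw [norm1_dualOfValue]
  calc _ = ∑ t ∈ range (T + 1), ∑ s, optValue T p r L t s :=
        sum_congr rfl fun t ht => sum_congr rfl fun s _ => abs_of_nonneg <|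
          optValue_nonneg T p r L hp (fun t ht s a m hm => (hr t ht s a m hm).1) hL
            (mem_range_succ_iff.1 ht) s
    _ ≤ _ := (sum_optValue_le T p r L hp (fun t ht s a m hm => (hr t ht s a m hm).2) hL).trans_eq
        (by ring)

lemma norm1_bellmanGap_le {rmax : ℝ} (hrmax : 0 ≤ rmax) (hp : IsKernel T p)
    (hr : ∀ t ≤ T, ∀ s a m, IsSimplex m → 0 ≤ r t s a m ∧ r t s a m ≤ rmax)
    (hL : ∀ t ≤ T, IsSimplex (L t)) :
    norm1 (bellmanGap T p r L) ≤ (Fintype.card S : ℝ) * (Fintype.card A : ℝ) *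
      (((T : ℝ) + 1) ^ 2 - ((T : ℝ) + 1) + 2) * rmax := by
  have hr0 : ∀ t ≤ T, ∀ s a m, IsSimplex m → 0 ≤ r t s a m := fun t ht s a m hm =>
    (hr t ht s a m hm).1
  have hgauss : ((T : ℝ) + 1) * ((T : ℝ) + 2) / 2 ≤ ((T : ℝ) + 1) ^ 2 - ((T : ℝ) + 1) + 2 := by
    nlinarith [sq_nonneg ((T : ℝ) - 1)]
  calc norm1 (bellmanGap T p r L)
      ≤ ∑ x : Fin (T + 1) × S × A, optValue T p r L x.1 x.2.1 :=
        sum_le_sum fun x _ => by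
          rw [abs_of_nonneg (bellmanGap_nonneg T p r L x), bellmanGap, sub_le_self_iff]
          exact optQ_nonneg T p r L hp hr0 hL (by omega) _ _
    _ = Fintype.card A * ∑ t ∈ range (T + 1), ∑ s, optValue T p r L t s := by
        refine (sum_fin_prod_eq_sum_range T fun t (sa : S × A) => optValue T p r L t sa.1).trans ?_
        simp [Fintype.sum_prod_type, mul_sum]
    _ ≤ Fintype.card A * (Fintype.card S * (((T : ℝ) + 1) * ((T : ℝ) + 2) / 2) * rmax) :=
        mul_le_mul_of_nonneg_left
          (sum_optValue_le T p r L hp (fun t ht s a m hm => (hr t ht s a m hm).2) hL)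
          (Nat.cast_nonneg _)
    _ ≤ _ := by
        have hC : (0 : ℝ) ≤ Fintype.card S * Fintype.card A * rmax := by positivity
        linarith [mul_le_mul_of_nonneg_left hgauss hC]

end DynamicProgramming

lemma popCMFOMOObj_eq [Fintype S] [Fintype A] [DecidableEq S] {T k : ℕ} {μ0 : S → ℝ}
    {L : ℕ → S × A → ℝ} {p : ℕ → S → A → (S × A → ℝ) → S → ℝ} {r : ℕ → S → A → (S × A → ℝ) → ℝ}
    {cp : ℕ → (S × A → ℝ) → Fin k → ℝ} {γ0 : Fin k → ℝ} (c1 c2 c3 c4 : ℝ)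
    {y : Fin (T + 1) × S → ℝ} {z : Fin (T + 1) × S × A → ℝ} {w : Fin k → ℝ}
    (hstat : ∀ x, -rLvec T r L x = tmulVec (ALmat T p L) y x + z x)
    (hflow : mulVec (ALmat T p L) (toVec T L) = bvec T μ0)
    (hL : ∀ t ≤ T, ∑ sa, L t sa = 1)
    (hw : w = fun i => γ0 i - ∑ t ∈ range (T + 1), cp t (L t) i) :
    PopCMFOMOObj T k μ0 p r cp γ0 c1 c2 c3 c4 (toVec T L) y z w = c3 * dot z (toVec T L) := by
  have hcost : ∀ i, dot (cLmat T k (fun t _ _ m => cp t m) L i) (toVec T L) =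
      ∑ t ∈ range (T + 1), cp t (L t) i := fun i =>
    (sum_fin_prod_eq_sum_range T fun t (sa : S × A) => cp t (L t) i * L t sa).trans <|
      sum_congr rfl fun t ht => by rw [← mul_sum, hL t (mem_range_succ_iff.1 ht),
        mul_one]
  have h1 : norm2 (fun x => tmulVec (ALmat T p L) y x + z x + rLvec T r L x) = 0 :=
    norm2_eq_zero_iff.2 fun x => by linarith [hstat x]
  have h2 : norm2 (fun row => mulVec (ALmat T p L) (toVec T L) row - bvec T μ0 row) = 0 :=
    norm2_eq_zero_iff.2 fun row => by rw [hflow, sub_self]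
  have h4 : norm2 (fun i => γ0 i - dot (cLmat T k (fun t _ _ m => cp t m) L i) (toVec T L) -
      w i) = 0 :=
    norm2_eq_zero_iff.2 fun i => by rw [hcost, hw, sub_self]
  rw [PopCMFOMOObj, ALmat_toFam_toVec, rLvec_toFam_toVec, cLmat_toFam_toVec, h1, h2, h4]
  ring

theorem pop_cmfomo_characteristicity_general {S A : Type*} [Fintype S] [Fintype A] [DecidableEq S]
    [Nonempty S] [Nonempty A]
    (T k : ℕ) (μ0 : S → ℝ) (hμ0 : IsSimplex μ0)
    (p : ℕ → S → A → (S × A → ℝ) → S → ℝ) (hp : IsKernel T p)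
    (r : ℕ → S → A → (S × A → ℝ) → ℝ) (rmax : ℝ)
    (hr : ∀ t ≤ T, ∀ (s : S) (a : A) (m : S × A → ℝ), IsSimplex m →
      0 ≤ r t s a m ∧ r t s a m ≤ rmax)
    (cp : ℕ → (S × A → ℝ) → Fin k → ℝ)
    (hcp : ∀ t ≤ T, ∀ m : S × A → ℝ, IsSimplex m → ∀ i, 0 ≤ cp t m i)
    (γ0 : Fin k → ℝ)
    (ε1 : ℝ)
    (c1 c2 c3 c4 : ℝ) (hc3 : 0 < c3)
    (π : ℕ → S → A → ℝ) (hπ : IsPolicy π)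
    (hfeagap : GfeaPop T k μ0 p cp γ0 π = 0)
    (hoptgap : 0 ≤ GoptPop T μ0 p r π ∧ GoptPop T μ0 p r π ≤ ε1)
    (w : Fin k → ℝ)
    (hw : w = fun i => γ0 i - ∑ t ∈ Finset.range (T + 1), cp t (psiInd μ0 p π t) i) :
    ∃ (d : Fin (T + 1) × S × A → ℝ) (y : Fin (T + 1) × S → ℝ)
      (z : Fin (T + 1) × S × A → ℝ),
      PopKKT T μ0 p r (psiInd μ0 p π) d y z ∧
      norm1 y ≤ (Fintype.card S : ℝ) * ((T : ℝ) + 1) * ((T : ℝ) + 2) / 2 * rmax ∧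
      norm1 z ≤ (Fintype.card S : ℝ) * (Fintype.card A : ℝ) *
          (((T : ℝ) + 1) ^ 2 - ((T : ℝ) + 1) + 2) * rmax ∧
      PopCMFOMOFeasible T k rmax γ0 (toVec T (psiInd μ0 p π)) y z w ∧
      0 ≤ PopCMFOMOObj T k μ0 p r cp γ0 c1 c2 c3 c4 (toVec T (psiInd μ0 p π)) y z w ∧
      PopCMFOMOObj T k μ0 p r cp γ0 c1 c2 c3 c4 (toVec T (psiInd μ0 p π)) y z w ≤
        ε1 * c3 := by
  classical
  have hgap := goptPop_eq_dot_bellmanGap T p r hμ0 hp hπ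
  set L := psiInd μ0 p π
  have hL : ∀ t ≤ T, IsSimplex (L t) := isSimplex_psiInd hμ0 hp hπ
  have hrmax : 0 ≤ rmax :=
    let h := hr T le_rfl (Classical.arbitrary S) (Classical.arbitrary A) _ (hL T le_rfl)
    h.1.trans h.2
  have hflow : mulVec (ALmat T p L) (toVec T L) = bvec T μ0 := by
    have h := mulVec_ALmat_psi (T := T) (p := p) (L := L) (μ0 := μ0) hπ
    rwa [psi_psiInd] at h
  have hw_mem : ∀ i, 0 ≤ w i ∧ w i ≤ γ0 i := fun i => by
    have hfea := min_eq_left_iff.1 (norm2_eq_zero_iff.1 hfeagap i)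
    have hcost : 0 ≤ ∑ t ∈ range (T + 1), cp t (L t) i := sum_nonneg fun t ht =>
      hcp t (mem_range_succ_iff.1 ht) _ (hL t (mem_range_succ_iff.1 ht)) i
    rw [hw]
    exact ⟨by linarith, by linarith⟩
  have hy := norm1_dualOfValue_optValue_le T p r L hp hr hL
  have hz := norm1_bellmanGap_le T p r L hrmax hp hr hL
  have hobj := popCMFOMOObj_eq c1 c2 c3 c4 (neg_rLvec_eq_tmulVec_add_bellmanGap T p r L) hflow
    (fun t ht => (hL t ht).2) hw
  refine ⟨_, _, _, popKKT_greedyPolicy T p r L hμ0 hp hL, hy, hz,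
    ⟨fun x => (hL x.1 (by omega)).1 _, fun t => (hL t (by omega)).2, hy,
      bellmanGap_nonneg T p r L, hz, hw_mem⟩, ?_, ?_⟩ <;> rw [hobj, ← hgap]
  exacts [mul_nonneg hc3.le hoptgap.1, by linarith [mul_le_mul_of_nonneg_left hoptgap.2 hc3.le]]

/-- Theorem 4.3 (Characteristicity under population-level constraints): a policy with
zero feasibility gap and optimality gap at most `ε1` yields, via `L = Ψ(π)`,
`w = γ0 - Σ_t c_t(L_t)` and a bounded solution of the KKT system `𝒦^p(L)`, a feasible
point of the population-level CMFOMO problem with objective value at most `ε1 c3`. -/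
theorem pop_cmfomo_characteristicity {S A : Type*} [Fintype S] [Fintype A] [DecidableEq S]
    [Nonempty S] [Nonempty A]
    (T k : ℕ) (μ0 : S → ℝ) (hμ0 : IsSimplex μ0)
    (p : ℕ → S → A → (S × A → ℝ) → S → ℝ) (hp : IsKernel T p)
    (r : ℕ → S → A → (S × A → ℝ) → ℝ) (rmax : ℝ)
    (hr : ∀ t ≤ T, ∀ (s : S) (a : A) (m : S × A → ℝ), IsSimplex m →
      0 ≤ r t s a m ∧ r t s a m ≤ rmax)
    (cp : ℕ → (S × A → ℝ) → Fin k → ℝ)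
    (hcp : ∀ t ≤ T, ∀ m : S × A → ℝ, IsSimplex m → ∀ i, 0 ≤ cp t m i)
    (γ0 : Fin k → ℝ)
    (ε1 : ℝ) (hε1 : 0 ≤ ε1)
    (c1 c2 c3 c4 : ℝ) (hc1 : 0 < c1) (hc2 : 0 < c2) (hc3 : 0 < c3) (hc4 : 0 < c4)
    (π : ℕ → S → A → ℝ) (hπ : IsPolicy π)
    (hfeagap : GfeaPop T k μ0 p cp γ0 π = 0)
    (hoptgap : 0 ≤ GoptPop T μ0 p r π ∧ GoptPop T μ0 p r π ≤ ε1)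
    (w : Fin k → ℝ)
    (hw : w = fun i => γ0 i - ∑ t ∈ Finset.range (T + 1), cp t (psiInd μ0 p π t) i) :
    ∃ (d : Fin (T + 1) × S × A → ℝ) (y : Fin (T + 1) × S → ℝ)
      (z : Fin (T + 1) × S × A → ℝ),
      PopKKT T μ0 p r (psiInd μ0 p π) d y z ∧
      norm1 y ≤ (Fintype.card S : ℝ) * ((T : ℝ) + 1) * ((T : ℝ) + 2) / 2 * rmax ∧
      norm1 z ≤ (Fintype.card S : ℝ) * (Fintype.card A : ℝ) *
          (((T : ℝ) + 1) ^ 2 - ((T : ℝ) + 1) + 2) * rmax ∧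
      PopCMFOMOFeasible T k rmax γ0 (toVec T (psiInd μ0 p π)) y z w ∧
      0 ≤ PopCMFOMOObj T k μ0 p r cp γ0 c1 c2 c3 c4 (toVec T (psiInd μ0 p π)) y z w ∧
      PopCMFOMOObj T k μ0 p r cp γ0 c1 c2 c3 c4 (toVec T (psiInd μ0 p π)) y z w ≤
        ε1 * c3 :=
  pop_cmfomo_characteristicity_general T k μ0 hμ0 p hp r rmax hr cp hcp γ0 ε1 c1 c2 c3 c4 hc3 π hπ
    hfeagap hoptgap w hw

end CMFG
end

section
/- Let c^p and c^a be a pair of twinned cost families (c^p population-level, c^a agent-population-level). If (π, L) is a CMFG Nash equilibrium for the game with cost family c^p (i.e., π is optimal for the constrained MDP whose constraint is Σ_{t∈𝒯} c^p_t(L_t) ≤ γ0, and L = Ψ(π)), then (π, L) is also a CMFG Nash equilibrium for the game with cost family c^a (i.e., π is optimal for the constrained MDP whose constraint is Σ_{t∈𝒯}Σ_{s,a} c^a_t(s,a,L_t)Ψ_t(π,L)(s,a) ≤ γ0, and L = Ψ(π)). -/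
open Finset

namespace CMFG

variable {S A : Type*} [Fintype S] [Fintype A]

lemma psi_simplex_aux {S A : Type*} [Fintype S] [Fintype A]
    (T : ℕ) (μ0 : S → ℝ) (hμ0 : IsSimplex μ0)
    (p : ℕ → S → A → (S × A → ℝ) → S → ℝ) (hp : IsKernel T p)
    (π : ℕ → S → A → ℝ) (hπ : IsPolicy π) (L : ℕ → S × A → ℝ)
    (hL : ∀ t < T, IsSimplex (L t)) :
    ∀ t ≤ T, IsSimplex (psi μ0 p π L t) := by
  intro t
  induction t with
  | zero =>
    intro _
    constructor
    · intro sa; exact mul_nonneg ((hπ 0 sa.1).1 sa.2) (hμ0.1 sa.1)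
    · rw [Fintype.sum_prod_type]
      have : ∀ s : S, ∑ a : A, psi μ0 p π L 0 (s, a) = μ0 s := by
        intro s
        simp only [psi]
        rw [← Finset.sum_mul, (hπ 0 s).2, one_mul]
      simp only [this]
      exact hμ0.2
  | succ t ih =>
    intro ht
    have htT : t < T := Nat.lt_of_succ_le ht
    have hLt := hL t htT
    have hψ := ih htT.le
    have hker := hp t htT.le
    constructor
    · intro sa
      refine mul_nonneg ((hπ (t+1) sa.1).1 sa.2) (Finset.sum_nonneg fun sa' _ => ?_)
      exact mul_nonneg ((hker sa'.1 sa'.2 (L t) hLt).1 sa.1) (hψ.1 sa')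
    · rw [Fintype.sum_prod_type]
      have key : ∀ s : S, ∑ a : A, psi μ0 p π L (t+1) (s, a) =
          ∑ sa' : S × A, p t sa'.1 sa'.2 (L t) s * psi μ0 p π L t sa' := by
        intro s
        simp only [psi]
        rw [← Finset.sum_mul, (hπ (t+1) s).2, one_mul]
      simp only [key]
      rw [Finset.sum_comm]
      have : ∀ sa' : S × A, ∑ s : S, p t sa'.1 sa'.2 (L t) s * psi μ0 p π L t sa' =
          psi μ0 p π L t sa' := by
        intro sa'
        rw [← Finset.sum_mul, (hker sa'.1 sa'.2 (L t) hLt).2, one_mul]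
      simp only [this]
      exact hψ.2

lemma psiInd_simplex {S A : Type*} [Fintype S] [Fintype A]
    (T : ℕ) (μ0 : S → ℝ) (hμ0 : IsSimplex μ0)
    (p : ℕ → S → A → (S × A → ℝ) → S → ℝ) (hp : IsKernel T p)
    (π : ℕ → S → A → ℝ) (hπ : IsPolicy π) :
    ∀ t ≤ T, IsSimplex (psiInd μ0 p π t) := by
  intro t
  induction t with
  | zero =>
    intro _
    constructor
    · intro sa; exact mul_nonneg ((hπ 0 sa.1).1 sa.2) (hμ0.1 sa.1)
    · rw [Fintype.sum_prod_type]
      have : ∀ s : S, ∑ a : A, psiInd μ0 p π 0 (s, a) = μ0 s := by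
        intro s
        simp only [psiInd]
        rw [← Finset.sum_mul, (hπ 0 s).2, one_mul]
      simp only [this]
      exact hμ0.2
  | succ t ih =>
    intro ht
    have htT : t < T := Nat.lt_of_succ_le ht
    have hψ := ih htT.le
    have hker := hp t htT.le
    constructor
    · intro sa
      refine mul_nonneg ((hπ (t+1) sa.1).1 sa.2) (Finset.sum_nonneg fun sa' _ => ?_)
      exact mul_nonneg ((hker sa'.1 sa'.2 _ hψ).1 sa.1) (hψ.1 sa')
    · rw [Fintype.sum_prod_type]
      have key : ∀ s : S, ∑ a : A, psiInd μ0 p π (t+1) (s, a) =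
          ∑ sa' : S × A, p t sa'.1 sa'.2 (psiInd μ0 p π t) s * psiInd μ0 p π t sa' := by
        intro s
        simp only [psiInd]
        rw [← Finset.sum_mul, (hπ (t+1) s).2, one_mul]
      simp only [key]
      rw [Finset.sum_comm]
      have : ∀ sa' : S × A, ∑ s : S,
          p t sa'.1 sa'.2 (psiInd μ0 p π t) s * psiInd μ0 p π t sa' =
          psiInd μ0 p π t sa' := by
        intro sa'
        rw [← Finset.sum_mul, (hker sa'.1 sa'.2 _ hψ).2, one_mul]
      simp only [this]
      exact hψ.2

lemma psi_eq_psiInd {S A : Type*} [Fintype S] [Fintype A]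
    (T : ℕ) (μ0 : S → ℝ) (p : ℕ → S → A → (S × A → ℝ) → S → ℝ)
    (π : ℕ → S → A → ℝ) (L : ℕ → S × A → ℝ)
    (hL : ∀ t ≤ T, L t = psiInd μ0 p π t) :
    ∀ t ≤ T, psi μ0 p π L t = psiInd μ0 p π t := by
  intro t
  induction t with
  | zero => intro _; rfl
  | succ t ih =>
    intro ht
    have htT : t ≤ T := Nat.le_of_succ_le ht
    funext sa
    simp only [psi, psiInd, ih htT, hL t htT]

/-- Theorem 4.4: for twinned cost families `c^p` (population-level) and `c^a`
(agent-population-level), every CMFG Nash equilibrium under `c^p` is also a CMFG Nash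
equilibrium under `c^a`. -/
theorem twinned_pop_nash_is_agent_nash {S A : Type*} [Fintype S] [Fintype A]
    [Nonempty S] [Nonempty A]
    (T k : ℕ) (μ0 : S → ℝ) (hμ0 : IsSimplex μ0)
    (p : ℕ → S → A → (S × A → ℝ) → S → ℝ) (hp : IsKernel T p)
    (r : ℕ → S → A → (S × A → ℝ) → ℝ) (γ0 : Fin k → ℝ)
    (cpop : ℕ → (S × A → ℝ) → Fin k → ℝ)
    (ca : ℕ → S → A → (S × A → ℝ) → Fin k → ℝ)
    (htwin : ∀ L : ℕ → S × A → ℝ, IsFlow L → ∀ i,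
      (∑ t ∈ Finset.range (T + 1), cpop t (L t) i) =
        ∑ t ∈ Finset.range (T + 1), ∑ sa : S × A, ca t sa.1 sa.2 (L t) i * L t sa)
    (π : ℕ → S → A → ℝ) (L : ℕ → S × A → ℝ)
    (hNE : IsCMFGNash T k μ0 p r (fun t _ _ m => cpop t m) γ0 π L) :
    IsCMFGNash T k μ0 p r ca γ0 π L := by
  obtain ⟨⟨hπ, hfeas, hopt⟩, hcons⟩ := hNE
  have hLsimp : ∀ t ≤ T, IsSimplex (L t) := fun t ht =>
    (hcons t ht) ▸ psiInd_simplex T μ0 hμ0 p hp π hπ t ht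
  -- population-level cost is policy-independent
  have hcostp : ∀ π', IsPolicy π' → ∀ i,
      Cost T k μ0 p (fun t _ _ m => cpop t m) π' L i =
        ∑ t ∈ Finset.range (T + 1), cpop t (L t) i := by
    intro π' hπ' i
    unfold Cost
    refine Finset.sum_congr rfl fun t ht => ?_
    have ht' : t ≤ T := Nat.lt_succ_iff.mp (Finset.mem_range.mp ht)
    have hmass := (psi_simplex_aux T μ0 hμ0 p hp π' hπ' L
      (fun u hu => hLsimp u hu.le) t ht').2
    rw [← Finset.mul_sum, hmass, mul_one]
  have hconst : ∀ i, ∑ t ∈ Finset.range (T + 1), cpop t (L t) i ≤ γ0 i := by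
    intro i; rw [← hcostp π hπ i]; exact hfeas i
  -- a genuine flow agreeing with L on [0, T]
  set L' : ℕ → S × A → ℝ := fun t =>
    if t ≤ T then L t else fun _ => (Fintype.card (S × A) : ℝ)⁻¹ with hL'
  have hcard : (Fintype.card (S × A) : ℝ) ≠ 0 := by
    exact_mod_cast Fintype.card_ne_zero
  have hflow : IsFlow L' := by
    intro t
    by_cases ht : t ≤ T
    · simpa [hL', ht] using hLsimp t ht
    · constructor
      · intro sa; simp [hL', ht]
        positivity
      · simp [hL', ht, Finset.sum_const, Finset.card_univ]
        field_simp
  have htw := htwin L' hflow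
  have hLeq : ∀ t ∈ Finset.range (T + 1), L' t = L t := by
    intro t ht
    have : t ≤ T := Nat.lt_succ_iff.mp (Finset.mem_range.mp ht)
    simp [hL', this]
  have htwL : ∀ i, (∑ t ∈ Finset.range (T + 1), cpop t (L t) i) =
      ∑ t ∈ Finset.range (T + 1), ∑ sa : S × A, ca t sa.1 sa.2 (L t) i * L t sa := by
    intro i
    calc ∑ t ∈ Finset.range (T + 1), cpop t (L t) i
        = ∑ t ∈ Finset.range (T + 1), cpop t (L' t) i :=
          Finset.sum_congr rfl (fun t ht => by rw [hLeq t ht])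
      _ = ∑ t ∈ Finset.range (T + 1), ∑ sa : S × A, ca t sa.1 sa.2 (L' t) i * L' t sa := htw i
      _ = ∑ t ∈ Finset.range (T + 1), ∑ sa : S × A, ca t sa.1 sa.2 (L t) i * L t sa :=
          Finset.sum_congr rfl (fun t ht => by rw [hLeq t ht])
  have hpsiL : ∀ t ≤ T, psi μ0 p π L t = L t := by
    intro t ht
    rw [psi_eq_psiInd T μ0 p π L hcons t ht, ← hcons t ht]
  refine ⟨⟨hπ, ?_, ?_⟩, hcons⟩
  · intro i
    have hCa : Cost T k μ0 p ca π L i =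
        ∑ t ∈ Finset.range (T + 1), ∑ sa : S × A, ca t sa.1 sa.2 (L t) i * L t sa := by
      unfold Cost
      refine Finset.sum_congr rfl fun t ht => ?_
      rw [hpsiL t (Nat.lt_succ_iff.mp (Finset.mem_range.mp ht))]
    rw [hCa, ← htwL i]
    exact hconst i
  · intro π' hπ' _
    exact hopt π' hπ' (fun i => by rw [hcostp π' hπ' i]; exact hconst i)

end CMFG
end

section
/- Fix a mean-field flow L, let ε > 0, and let γ1, γ2 ∈ ℝ^k satisfy ‖γ1 − γ2‖_1 ≤ ε. Assume boundedness, and assume there exists δ > 0 such that for each j ∈ {1, 2} and each i ∈ {1,…,k} there is a policy π with 𝒞^π(L) ≤ γ_j and [𝒞^π(L)]_i ≤ [γ_j]_i − δ. Let V*(L, γ_j) denote the optimal value of the constrained MDP at L with threshold γ_j (maximize V^π(L) over policies with 𝒞^π(L) ≤ γ_j). Then |V*(L, γ1) − V*(L, γ2)| ≤ ε·|𝒯|·r_max/δ. -/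
open Finset

namespace CMFG

variable {S A : Type*} [Fintype S] [Fintype A]

section SensitivityAux

variable {S A : Type*} [Fintype S] [Fintype A]

lemma psi_zero_marg (μ0 : S → ℝ) (p : ℕ → S → A → (S × A → ℝ) → S → ℝ)
    {π : ℕ → S → A → ℝ} (L : ℕ → S × A → ℝ) (hπ : IsPolicy π) (s : S) :
    ∑ a : A, psi μ0 p π L 0 (s, a) = μ0 s := by
  simp only [psi]
  rw [← Finset.sum_mul, (hπ 0 s).2, one_mul]

lemma psi_succ_marg (μ0 : S → ℝ) (p : ℕ → S → A → (S × A → ℝ) → S → ℝ)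
    {π : ℕ → S → A → ℝ} (L : ℕ → S × A → ℝ) (hπ : IsPolicy π) (t : ℕ) (s : S) :
    ∑ a : A, psi μ0 p π L (t + 1) (s, a) =
      ∑ sa' : S × A, p t sa'.1 sa'.2 (L t) s * psi μ0 p π L t sa' := by
  simp only [psi]
  rw [← Finset.sum_mul, (hπ (t + 1) s).2, one_mul]

lemma psi_nonneg {T : ℕ} {μ0 : S → ℝ} {p : ℕ → S → A → (S × A → ℝ) → S → ℝ}
    {π : ℕ → S → A → ℝ} {L : ℕ → S × A → ℝ}
    (hμ0 : IsSimplex μ0) (hp : IsKernel T p) (hL : IsFlow L) (hπ : IsPolicy π) :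
    ∀ t, t ≤ T → ∀ sa : S × A, 0 ≤ psi μ0 p π L t sa := by
  intro t
  induction t with
  | zero =>
    intro _ sa
    simp only [psi]
    exact mul_nonneg ((hπ 0 sa.1).1 sa.2) (hμ0.1 sa.1)
  | succ t ih =>
    intro ht sa
    have ht' : t ≤ T := Nat.le_of_succ_le ht
    simp only [psi]
    exact mul_nonneg ((hπ (t + 1) sa.1).1 sa.2) (Finset.sum_nonneg fun sa' _ =>
      mul_nonneg ((hp t ht' sa'.1 sa'.2 (L t) (hL t)).1 sa.1) (ih ht' sa'))

lemma psi_mass {T : ℕ} {μ0 : S → ℝ} {p : ℕ → S → A → (S × A → ℝ) → S → ℝ}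
    {π : ℕ → S → A → ℝ} {L : ℕ → S × A → ℝ}
    (hμ0 : IsSimplex μ0) (hp : IsKernel T p) (hL : IsFlow L) (hπ : IsPolicy π) :
    ∀ t, t ≤ T → ∑ sa : S × A, psi μ0 p π L t sa = 1 := by
  intro t
  induction t with
  | zero =>
    intro _
    rw [Fintype.sum_prod_type]
    calc ∑ s : S, ∑ a : A, psi μ0 p π L 0 (s, a) = ∑ s : S, μ0 s :=
          Finset.sum_congr rfl fun s _ => psi_zero_marg μ0 p L hπ s
      _ = 1 := hμ0.2
  | succ t ih =>
    intro ht
    have ht' : t ≤ T := Nat.le_of_succ_le ht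
    rw [Fintype.sum_prod_type]
    calc ∑ s : S, ∑ a : A, psi μ0 p π L (t + 1) (s, a)
        = ∑ s : S, ∑ sa' : S × A, p t sa'.1 sa'.2 (L t) s * psi μ0 p π L t sa' :=
          Finset.sum_congr rfl fun s _ => psi_succ_marg μ0 p L hπ t s
      _ = ∑ sa' : S × A, (∑ s : S, p t sa'.1 sa'.2 (L t) s) * psi μ0 p π L t sa' := by
          rw [Finset.sum_comm]
          exact Finset.sum_congr rfl fun sa' _ => (Finset.sum_mul _ _ _).symm
      _ = ∑ sa' : S × A, psi μ0 p π L t sa' :=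
          Finset.sum_congr rfl fun sa' _ => by
            rw [(hp t ht' sa'.1 sa'.2 (L t) (hL t)).2, one_mul]
      _ = 1 := ih ht'

lemma exists_policy_realizing [Nonempty A] (T : ℕ) (μ0 : S → ℝ) (hμ0 : IsSimplex μ0)
    (p : ℕ → S → A → (S × A → ℝ) → S → ℝ) (hp : IsKernel T p)
    (L : ℕ → S × A → ℝ) (hL : IsFlow L) (d : ℕ → S × A → ℝ)
    (hd0 : ∀ t ≤ T, ∀ sa, 0 ≤ d t sa)
    (h0 : ∀ s, ∑ a : A, d 0 (s, a) = μ0 s)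
    (hsucc : ∀ t, t + 1 ≤ T → ∀ s, ∑ a : A, d (t + 1) (s, a) =
        ∑ sa' : S × A, p t sa'.1 sa'.2 (L t) s * d t sa') :
    ∃ π, IsPolicy π ∧ ∀ t ≤ T, ∀ sa, psi μ0 p π L t sa = d t sa := by
  classical
  have cardA : (0 : ℝ) < (Fintype.card A : ℝ) := Nat.cast_pos.mpr Fintype.card_pos
  set π : ℕ → S → A → ℝ := fun t s a =>
    if t ≤ T ∧ 0 < ∑ a' : A, d t (s, a') then d t (s, a) / ∑ a' : A, d t (s, a')
    else (Fintype.card A : ℝ)⁻¹ with hπdef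
  have hπ : IsPolicy π := by
    intro t s
    by_cases h : t ≤ T ∧ 0 < ∑ a' : A, d t (s, a')
    · refine ⟨fun a => ?_, ?_⟩
      · simp only [hπdef, if_pos h]
        exact div_nonneg (hd0 t h.1 (s, a)) h.2.le
      · simp only [hπdef, if_pos h]
        rw [← Finset.sum_div, div_self (ne_of_gt h.2)]
    · refine ⟨fun a => ?_, ?_⟩
      · simp only [hπdef, if_neg h]
        exact inv_nonneg.mpr (Nat.cast_nonneg _)
      · simp only [hπdef, if_neg h]
        rw [Finset.sum_const, nsmul_eq_mul, Finset.card_univ,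
          mul_inv_cancel₀ (ne_of_gt cardA)]
  have key : ∀ t, t ≤ T → ∀ s a, π t s a * (∑ a' : A, d t (s, a')) = d t (s, a) := by
    intro t ht s a
    by_cases h : 0 < ∑ a' : A, d t (s, a')
    · simp only [hπdef]
      rw [if_pos (⟨ht, h⟩ : t ≤ T ∧ 0 < ∑ a' : A, d t (s, a'))]
      rw [div_mul_cancel₀ _ (ne_of_gt h)]
    · have hz : ∑ a' : A, d t (s, a') = 0 :=
        le_antisymm (not_lt.1 h) (Finset.sum_nonneg fun a' _ => hd0 t ht (s, a'))
      have hda : d t (s, a) = 0 :=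
        (Finset.sum_eq_zero_iff_of_nonneg (fun a' _ => hd0 t ht (s, a'))).1 hz a
          (Finset.mem_univ a)
      rw [hz, hda, mul_zero]
  refine ⟨π, hπ, ?_⟩
  intro t
  induction t with
  | zero =>
    intro ht sa
    have h1 : psi μ0 p π L 0 sa = π 0 sa.1 sa.2 * μ0 sa.1 := rfl
    rw [h1, ← h0 sa.1]
    exact key 0 ht sa.1 sa.2
  | succ t ih =>
    intro ht sa
    have ht' : t ≤ T := Nat.le_of_succ_le ht
    have h1 : psi μ0 p π L (t + 1) sa =
        π (t + 1) sa.1 sa.2 * ∑ sa' : S × A, p t sa'.1 sa'.2 (L t) sa.1 * psi μ0 p π L t sa' :=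
      rfl
    have h2 : ∑ sa' : S × A, p t sa'.1 sa'.2 (L t) sa.1 * psi μ0 p π L t sa'
        = ∑ a' : A, d (t + 1) (sa.1, a') := by
      rw [hsucc t ht sa.1]
      exact Finset.sum_congr rfl fun sa' _ => by rw [ih ht' sa']
    rw [h1, h2]
    exact key (t + 1) ht sa.1 sa.2

lemma exists_policy_mix [Nonempty A] (T : ℕ) (μ0 : S → ℝ) (hμ0 : IsSimplex μ0)
    (p : ℕ → S → A → (S × A → ℝ) → S → ℝ) (hp : IsKernel T p)
    (L : ℕ → S × A → ℝ) (hL : IsFlow L)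
    {n : ℕ} (Pf : Fin n → ℕ → S → A → ℝ) (hPf : ∀ j, IsPolicy (Pf j))
    (w : Fin n → ℝ) (hw0 : ∀ j, 0 ≤ w j) (hw1 : ∑ j, w j = 1) :
    ∃ π, IsPolicy π ∧ ∀ t ≤ T, ∀ sa,
      psi μ0 p π L t sa = ∑ j, w j * psi μ0 p (Pf j) L t sa := by
  refine exists_policy_realizing T μ0 hμ0 p hp L hL
    (fun t sa => ∑ j, w j * psi μ0 p (Pf j) L t sa) ?_ ?_ ?_
  · intro t ht sa
    exact Finset.sum_nonneg fun j _ =>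
      mul_nonneg (hw0 j) (psi_nonneg hμ0 hp hL (hPf j) t ht sa)
  · intro s
    rw [Finset.sum_comm]
    calc ∑ j, ∑ a : A, w j * psi μ0 p (Pf j) L 0 (s, a)
        = ∑ j, w j * μ0 s := Finset.sum_congr rfl fun j _ => by
          rw [← Finset.mul_sum, psi_zero_marg μ0 p L (hPf j)]
      _ = μ0 s := by rw [← Finset.sum_mul, hw1, one_mul]
  · intro t ht s
    rw [Finset.sum_comm]
    calc ∑ j, ∑ a : A, w j * psi μ0 p (Pf j) L (t + 1) (s, a)
        = ∑ j, ∑ sa' : S × A, w j * (p t sa'.1 sa'.2 (L t) s * psi μ0 p (Pf j) L t sa') := by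
          refine Finset.sum_congr rfl fun j _ => ?_
          rw [← Finset.mul_sum, psi_succ_marg μ0 p L (hPf j), Finset.mul_sum]
      _ = ∑ sa' : S × A, ∑ j, w j * (p t sa'.1 sa'.2 (L t) s * psi μ0 p (Pf j) L t sa') :=
          Finset.sum_comm
      _ = ∑ sa' : S × A, p t sa'.1 sa'.2 (L t) s * ∑ j, w j * psi μ0 p (Pf j) L t sa' := by
          refine Finset.sum_congr rfl fun sa' _ => ?_
          rw [Finset.mul_sum]
          exact Finset.sum_congr rfl fun j _ => by ring

lemma sum_mix {T n : ℕ} (f : ℕ → S × A → ℝ) (g : Fin n → ℕ → S × A → ℝ) (w : Fin n → ℝ) :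
    ∑ t ∈ Finset.range (T + 1), ∑ sa : S × A, f t sa * ∑ j, w j * g j t sa
      = ∑ j, w j * ∑ t ∈ Finset.range (T + 1), ∑ sa : S × A, f t sa * g j t sa := by
  calc ∑ t ∈ Finset.range (T + 1), ∑ sa : S × A, f t sa * ∑ j, w j * g j t sa
      = ∑ t ∈ Finset.range (T + 1), ∑ sa : S × A, ∑ j, w j * (f t sa * g j t sa) := by
        refine Finset.sum_congr rfl fun t _ => Finset.sum_congr rfl fun sa _ => ?_
        rw [Finset.mul_sum]
        exact Finset.sum_congr rfl fun j _ => by ring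
    _ = ∑ t ∈ Finset.range (T + 1), ∑ j, ∑ sa : S × A, w j * (f t sa * g j t sa) :=
        Finset.sum_congr rfl fun t _ => Finset.sum_comm
    _ = ∑ j, ∑ t ∈ Finset.range (T + 1), ∑ sa : S × A, w j * (f t sa * g j t sa) :=
        Finset.sum_comm
    _ = ∑ j, w j * ∑ t ∈ Finset.range (T + 1), ∑ sa : S × A, f t sa * g j t sa := by
        refine Finset.sum_congr rfl fun j _ => ?_
        rw [Finset.mul_sum]
        exact Finset.sum_congr rfl fun t _ => by rw [Finset.mul_sum]

lemma V_nonneg {T k : ℕ} {μ0 : S → ℝ} {p : ℕ → S → A → (S × A → ℝ) → S → ℝ}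
    {r : ℕ → S → A → (S × A → ℝ) → ℝ} {c : ℕ → S → A → (S × A → ℝ) → Fin k → ℝ}
    {π : ℕ → S → A → ℝ} {L : ℕ → S × A → ℝ} {rmax cmax : ℝ}
    (hμ0 : IsSimplex μ0) (hp : IsKernel T p) (hL : IsFlow L) (hπ : IsPolicy π)
    (hb : BoundedData T k r c rmax cmax) :
    0 ≤ V T μ0 p r π L := by
  refine Finset.sum_nonneg fun t ht => Finset.sum_nonneg fun sa _ => ?_
  have ht' : t ≤ T := Nat.lt_succ_iff.mp (Finset.mem_range.mp ht)
  exact mul_nonneg ((hb t ht' sa.1 sa.2 (L t) (hL t)).1.1)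
    (psi_nonneg hμ0 hp hL hπ t ht' sa)

lemma V_le_bound {T k : ℕ} {μ0 : S → ℝ} {p : ℕ → S → A → (S × A → ℝ) → S → ℝ}
    {r : ℕ → S → A → (S × A → ℝ) → ℝ} {c : ℕ → S → A → (S × A → ℝ) → Fin k → ℝ}
    {π : ℕ → S → A → ℝ} {L : ℕ → S × A → ℝ} {rmax cmax : ℝ}
    (hμ0 : IsSimplex μ0) (hp : IsKernel T p) (hL : IsFlow L) (hπ : IsPolicy π)
    (hb : BoundedData T k r c rmax cmax) :
    V T μ0 p r π L ≤ ((T : ℝ) + 1) * rmax := by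
  calc V T μ0 p r π L ≤ ∑ _t ∈ Finset.range (T + 1), rmax := by
        refine Finset.sum_le_sum fun t ht => ?_
        have ht' : t ≤ T := Nat.lt_succ_iff.mp (Finset.mem_range.mp ht)
        calc ∑ sa : S × A, r t sa.1 sa.2 (L t) * psi μ0 p π L t sa
            ≤ ∑ sa : S × A, rmax * psi μ0 p π L t sa :=
              Finset.sum_le_sum fun sa _ => mul_le_mul_of_nonneg_right
                ((hb t ht' sa.1 sa.2 (L t) (hL t)).1.2) (psi_nonneg hμ0 hp hL hπ t ht' sa)
          _ = rmax := by rw [← Finset.mul_sum, psi_mass hμ0 hp hL hπ t ht', mul_one]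
    _ = ((T : ℝ) + 1) * rmax := by
        rw [Finset.sum_const, Finset.card_range, nsmul_eq_mul]
        push_cast
        ring

end SensitivityAux

lemma vstar_sub_le {S A : Type*} [Fintype S] [Fintype A]
    [Nonempty S] [Nonempty A]
    (T k : ℕ) (μ0 : S → ℝ) (hμ0 : IsSimplex μ0)
    (p : ℕ → S → A → (S × A → ℝ) → S → ℝ) (hp : IsKernel T p)
    (r : ℕ → S → A → (S × A → ℝ) → ℝ)
    (c : ℕ → S → A → (S × A → ℝ) → Fin k → ℝ)
    (rmax cmax : ℝ) (hb : BoundedData T k r c rmax cmax)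
    (L : ℕ → S × A → ℝ) (hL : IsFlow L)
    (ε δ : ℝ) (hε : 0 < ε) (hδ : 0 < δ)
    (γ1 γ2 : Fin k → ℝ) (hγ : norm1 (fun i => γ1 i - γ2 i) ≤ ε)
    (hf1 : ∀ i : Fin k, ∃ π, IsPolicy π ∧
      (∀ j, Cost T k μ0 p c π L j ≤ γ1 j) ∧ Cost T k μ0 p c π L i ≤ γ1 i - δ)
    (hf2 : ∀ i : Fin k, ∃ π, IsPolicy π ∧
      (∀ j, Cost T k μ0 p c π L j ≤ γ2 j) ∧ Cost T k μ0 p c π L i ≤ γ2 i - δ) :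
    Vstar T k μ0 p r c γ1 L - Vstar T k μ0 p r c γ2 L ≤ ε * ((T : ℝ) + 1) * rmax / δ := by
  have hrmax : 0 ≤ rmax := by
    have hs : Nonempty S := inferInstance
    have ha : Nonempty A := inferInstance
    obtain ⟨s⟩ := hs; obtain ⟨a⟩ := ha
    have h := (hb 0 (Nat.zero_le T) s a (L 0) (hL 0)).1
    linarith [h.1, h.2]
  set E := ∑ i : Fin k, |γ1 i - γ2 i| with hE
  have hE0 : 0 ≤ E := Finset.sum_nonneg fun i _ => abs_nonneg _
  have hEε : E ≤ ε := by rw [hE]; simpa [norm1] using hγ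
  rcases eq_or_lt_of_le hE0 with hEzero | hEpos
  · have hγeq : γ1 = γ2 := by
      funext i
      have h := (Finset.sum_eq_zero_iff_of_nonneg
        (fun i (_ : i ∈ Finset.univ) => abs_nonneg (γ1 i - γ2 i))).1 hEzero.symm i
        (Finset.mem_univ i)
      have := abs_eq_zero.1 h
      linarith
    rw [hγeq, sub_self]
    exact div_nonneg (mul_nonneg (mul_nonneg hε.le (by positivity)) hrmax) hδ.le
  · have hk : 0 < k := by
      rcases Nat.eq_zero_or_pos k with h | h
      · exfalso; subst h; rw [hE] at hEpos; simp at hEpos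
      · exact h
    choose Pi hPipol hPifeas hPistrict using hf2
    set θ := E / (E + δ) with hθ
    have hEδ : 0 < E + δ := by linarith
    have hEne : E ≠ 0 := ne_of_gt hEpos
    have hEδne : E + δ ≠ 0 := ne_of_gt hEδ
    have hθ0 : 0 ≤ θ := div_nonneg hE0 hEδ.le
    have hθ1 : θ ≤ 1 := by rw [hθ, div_le_one hEδ]; linarith
    have bdd2 : BddAbove {v | ∃ π, IsPolicy π ∧
        (∀ i, Cost T k μ0 p c π L i ≤ γ2 i) ∧ v = V T μ0 p r π L} := by
      refine ⟨((T : ℝ) + 1) * rmax, fun v hv => ?_⟩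
      obtain ⟨π, hπ, _, rfl⟩ := hv
      exact V_le_bound hμ0 hp hL hπ hb
    have hne1 : {v | ∃ π, IsPolicy π ∧
        (∀ i, Cost T k μ0 p c π L i ≤ γ1 i) ∧ v = V T μ0 p r π L}.Nonempty := by
      obtain ⟨π0, hπ0, hfeas0, _⟩ := hf1 ⟨0, hk⟩
      exact ⟨V T μ0 p r π0 L, π0, hπ0, hfeas0, rfl⟩
    rw [sub_le_iff_le_add]
    unfold Vstar
    refine csSup_le hne1 fun v hv => ?_
    obtain ⟨π, hπ, hfeas, rfl⟩ := hv
    -- weights and policies for the mixture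
    set w : Fin (k + 1) → ℝ :=
      Fin.cases (1 - θ) (fun i => θ * (|γ1 i - γ2 i| / E)) with hw
    set Pf : Fin (k + 1) → ℕ → S → A → ℝ := Fin.cases π Pi with hPf
    have hw0 : ∀ j, 0 ≤ w j := by
      intro j
      refine Fin.cases ?_ ?_ j
      · simp only [hw, Fin.cases_zero]; linarith
      · intro i
        simp only [hw, Fin.cases_succ]
        have : 0 ≤ |γ1 i - γ2 i| / E := div_nonneg (abs_nonneg _) hE0
        exact mul_nonneg hθ0 this
    have hwsucc : ∑ i : Fin k, θ * (|γ1 i - γ2 i| / E) = θ := by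
      rw [← Finset.mul_sum, ← Finset.sum_div, ← hE, div_self hEne, mul_one]
    have hw1 : ∑ j, w j = 1 := by
      rw [Fin.sum_univ_succ]
      simp only [hw, Fin.cases_zero, Fin.cases_succ]
      rw [hwsucc]; ring
    have hPfpol : ∀ j, IsPolicy (Pf j) := by
      intro j
      refine Fin.cases ?_ ?_ j
      · simpa only [hPf, Fin.cases_zero] using hπ
      · intro i; simpa only [hPf, Fin.cases_succ] using hPipol i
    obtain ⟨π', hπ', hψ⟩ := exists_policy_mix T μ0 hμ0 p hp L hL Pf hPfpol w hw0 hw1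
    have hV' : V T μ0 p r π' L = ∑ j, w j * V T μ0 p r (Pf j) L := by
      have h1 : V T μ0 p r π' L = ∑ t ∈ Finset.range (T + 1), ∑ sa : S × A,
          r t sa.1 sa.2 (L t) * ∑ j, w j * psi μ0 p (Pf j) L t sa := by
        unfold V
        refine Finset.sum_congr rfl fun t ht => Finset.sum_congr rfl fun sa _ => ?_
        rw [hψ t (Nat.lt_succ_iff.mp (Finset.mem_range.mp ht)) sa]
      rw [h1, sum_mix]
      rfl
    have hC' : ∀ i, Cost T k μ0 p c π' L i = ∑ j, w j * Cost T k μ0 p c (Pf j) L i := by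
      intro i
      have h1 : Cost T k μ0 p c π' L i = ∑ t ∈ Finset.range (T + 1), ∑ sa : S × A,
          c t sa.1 sa.2 (L t) i * ∑ j, w j * psi μ0 p (Pf j) L t sa := by
        unfold Cost
        refine Finset.sum_congr rfl fun t ht => Finset.sum_congr rfl fun sa _ => ?_
        rw [hψ t (Nat.lt_succ_iff.mp (Finset.mem_range.mp ht)) sa]
      rw [h1, sum_mix]
      rfl
    have hfeas' : ∀ i, Cost T k μ0 p c π' L i ≤ γ2 i := by
      intro i
      rw [hC' i, Fin.sum_univ_succ]
      simp only [hw, hPf, Fin.cases_zero, Fin.cases_succ]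
      have h1 : Cost T k μ0 p c π L i ≤ γ2 i + |γ1 i - γ2 i| := by
        have h1a := hfeas i
        have h1b := le_abs_self (γ1 i - γ2 i)
        linarith
    -- sum over the feasible policies
      have h2 : ∀ j : Fin k, Cost T k μ0 p c (Pi j) L i
          ≤ γ2 i - (if j = i then δ else 0) := by
        intro j
        by_cases hj : j = i
        · subst hj; simpa using hPistrict j
        · simpa [hj] using hPifeas j i
      have h3 : ∑ j : Fin k, θ * (|γ1 j - γ2 j| / E) * Cost T k μ0 p c (Pi j) L i
          ≤ ∑ j : Fin k, θ * (|γ1 j - γ2 j| / E) * (γ2 i - (if j = i then δ else 0)) := by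
        refine Finset.sum_le_sum fun j _ => ?_
        have hwj : 0 ≤ θ * (|γ1 j - γ2 j| / E) :=
          mul_nonneg hθ0 (div_nonneg (abs_nonneg _) hE0)
        exact mul_le_mul_of_nonneg_left (h2 j) hwj
      have h4 : ∑ j : Fin k, θ * (|γ1 j - γ2 j| / E) * (γ2 i - (if j = i then δ else 0))
          = θ * γ2 i - θ * (|γ1 i - γ2 i| / E) * δ := by
        have hsplit : ∀ j : Fin k, θ * (|γ1 j - γ2 j| / E) * (γ2 i - (if j = i then δ else 0))
            = θ * (|γ1 j - γ2 j| / E) * γ2 i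
              - (if j = i then θ * (|γ1 j - γ2 j| / E) * δ else 0) := by
          intro j
          by_cases hj : j = i
          · simp only [hj, if_true]; ring
          · simp only [hj, if_false]; ring
        rw [Finset.sum_congr rfl fun j _ => hsplit j, Finset.sum_sub_distrib,
          Finset.sum_ite_eq' Finset.univ i
            (fun j => θ * (|γ1 j - γ2 j| / E) * δ)]
        have : ∑ j : Fin k, θ * (|γ1 j - γ2 j| / E) * γ2 i
            = (∑ j : Fin k, θ * (|γ1 j - γ2 j| / E)) * γ2 i := (Finset.sum_mul _ _ _).symm
        rw [this, hwsucc]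
        simp
      have h5 : (1 - θ) * Cost T k μ0 p c π L i ≤ (1 - θ) * (γ2 i + |γ1 i - γ2 i|) :=
        mul_le_mul_of_nonneg_left h1 (by linarith)
      have hkey : (1 - θ) * (γ2 i + |γ1 i - γ2 i|)
          + (θ * γ2 i - θ * (|γ1 i - γ2 i| / E) * δ) = γ2 i := by
        rw [hθ]
        field_simp
        ring
      linarith
    have hmem : V T μ0 p r π' L ∈ {v | ∃ π, IsPolicy π ∧
        (∀ i, Cost T k μ0 p c π L i ≤ γ2 i) ∧ v = V T μ0 p r π L} :=
      ⟨π', hπ', hfeas', rfl⟩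
    have hVle : V T μ0 p r π' L ≤ sSup {v | ∃ π, IsPolicy π ∧
        (∀ i, Cost T k μ0 p c π L i ≤ γ2 i) ∧ v = V T μ0 p r π L} := le_csSup bdd2 hmem
    have hVlow : V T μ0 p r π L ≤ V T μ0 p r π' L + θ * (((T : ℝ) + 1) * rmax) := by
      rw [hV', Fin.sum_univ_succ]
      simp only [hw, hPf, Fin.cases_zero, Fin.cases_succ]
      have hrest : 0 ≤ ∑ j : Fin k, θ * (|γ1 j - γ2 j| / E) * V T μ0 p r (Pi j) L :=
        Finset.sum_nonneg fun j _ => mul_nonneg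
          (mul_nonneg hθ0 (div_nonneg (abs_nonneg _) hE0))
          (V_nonneg hμ0 hp hL (hPipol j) hb)
      have hVub : V T μ0 p r π L ≤ ((T : ℝ) + 1) * rmax := V_le_bound hμ0 hp hL hπ hb
      have h5 : θ * V T μ0 p r π L ≤ θ * (((T : ℝ) + 1) * rmax) :=
        mul_le_mul_of_nonneg_left hVub hθ0
      linarith
    have hθbound : θ * (((T : ℝ) + 1) * rmax) ≤ ε * ((T : ℝ) + 1) * rmax / δ := by
      have hθle : θ ≤ ε / δ := by
        rw [hθ, div_le_div_iff₀ hEδ hδ]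
        nlinarith [mul_le_mul_of_nonneg_right hEε hδ.le, mul_nonneg hε.le hE0]
      calc θ * (((T : ℝ) + 1) * rmax) ≤ (ε / δ) * (((T : ℝ) + 1) * rmax) :=
            mul_le_mul_of_nonneg_right hθle (mul_nonneg (by positivity) hrmax)
        _ = ε * ((T : ℝ) + 1) * rmax / δ := by ring
    linarith

/-- Lemma B.1 (Sensitivity in the threshold): for a fixed mean-field flow `L` and two
thresholds `γ1, γ2` with `‖γ1 - γ2‖_1 ≤ ε`, both strictly feasible with margin `δ`, the
optimal values of the corresponding constrained MDPs differ by at most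
`ε |𝒯| r_max / δ`. -/
theorem cmdp_value_threshold_sensitivity {S A : Type*} [Fintype S] [Fintype A]
    [Nonempty S] [Nonempty A]
    (T k : ℕ) (μ0 : S → ℝ) (hμ0 : IsSimplex μ0)
    (p : ℕ → S → A → (S × A → ℝ) → S → ℝ) (hp : IsKernel T p)
    (r : ℕ → S → A → (S × A → ℝ) → ℝ)
    (c : ℕ → S → A → (S × A → ℝ) → Fin k → ℝ)
    (rmax cmax : ℝ) (hb : BoundedData T k r c rmax cmax)
    (L : ℕ → S × A → ℝ) (hL : IsFlow L)
    (ε δ : ℝ) (hε : 0 < ε) (hδ : 0 < δ)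
    (γ1 γ2 : Fin k → ℝ) (hγ : norm1 (fun i => γ1 i - γ2 i) ≤ ε)
    (hf1 : ∀ i : Fin k, ∃ π, IsPolicy π ∧
      (∀ j, Cost T k μ0 p c π L j ≤ γ1 j) ∧ Cost T k μ0 p c π L i ≤ γ1 i - δ)
    (hf2 : ∀ i : Fin k, ∃ π, IsPolicy π ∧
      (∀ j, Cost T k μ0 p c π L j ≤ γ2 j) ∧ Cost T k μ0 p c π L i ≤ γ2 i - δ) :
    |Vstar T k μ0 p r c γ1 L - Vstar T k μ0 p r c γ2 L| ≤
      ε * ((T : ℝ) + 1) * rmax / δ := by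
  rw [abs_sub_le_iff]
  constructor
  · exact vstar_sub_le T k μ0 hμ0 p hp r c rmax cmax hb L hL ε δ hε hδ γ1 γ2 hγ hf1 hf2
  · refine vstar_sub_le T k μ0 hμ0 p hp r c rmax cmax hb L hL ε δ hε hδ γ2 γ1 ?_ hf2 hf1
    simpa [norm1, abs_sub_comm] using hγ

end CMFG
end
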